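/- arXiv:2412.16415 — 5 statements merged into one kernel-verified Lean document; each statement's English description precedes it below -/
import Mathlib

section
/- Let d ≥ 1, p ∈ (0,1] and k ≥ 1. For every pair of distinct points x, y ∈ Δ_k := [−2^{k−1}, 2^{k−1})^d ∩ ℤ^d, the discrete fractal percolation satisfies P(x ∈ Q_d(p;k) and y ∈ Q_d(p;k)) ≤ p^{k + log₂|x−y| − (1/2)·log₂ d}, i.e. P(x, y ∈ Q_d(p;k)) ≤ p^k · (|x−y|/√d)^{log₂ p}. -/
open MeasureTheory ProbabilityTheory Set Pointwise
open scoped ENNReal Classical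

noncomputable section

/-- The lattice `ℤ^d`. -/
abbrev Zd (d : ℕ) := Fin d → ℤ

/-- Euclidean distance on `ℤ^d`. -/
def zdist {d : ℕ} (x y : Zd d) : ℝ := Real.sqrt (∑ i, ((x i - y i : ℤ) : ℝ) ^ 2)

/-- Euclidean norm on `ℤ^d`. -/
def znorm {d : ℕ} (x : Zd d) : ℝ := Real.sqrt (∑ i, ((x i : ℤ) : ℝ) ^ 2)

/-- Euclidean diameter of a subset of `ℤ^d`. -/
def zdiam {d : ℕ} (A : Set (Zd d)) : ℝ := sSup {r : ℝ | ∃ x ∈ A, ∃ y ∈ A, r = zdist x y}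

/-- The set of energies `Σ_{x,y∈A} μ(x)μ(y)(|x-y| ∨ 1)^(-β)` of probability measures `μ`
supported on `A`. -/
def discEnergies {d : ℕ} (β : ℝ) (A : Set (Zd d)) : Set ℝ :=
  { E | ∃ μ : Zd d → ℝ, (∀ x, 0 ≤ μ x) ∧ (∀ x, x ∉ A → μ x = 0) ∧ HasSum μ 1 ∧
        E = ∑' x, ∑' y, μ x * μ y * (max (zdist x y) 1) ^ (-β) }

/-- Discrete Newtonian capacity with parameter `β` (it equals `0` for `A = ∅`,
since `sInf ∅ = 0` and `0⁻¹ = 0` in `ℝ`). -/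
def discCap {d : ℕ} (β : ℝ) (A : Set (Zd d)) : ℝ := (sInf (discEnergies β A))⁻¹

/-- The box `Δ_k = [-2^(k-1), 2^(k-1))^d ∩ ℤ^d`. -/
def box (d k : ℕ) : Set (Zd d) := {x | ∀ i, -(2:ℤ)^(k-1) ≤ x i ∧ x i < (2:ℤ)^(k-1)}

/-- Edges of the complete `2^d`-ary tree of height `k`: the edge `(j, v)` joins the vertex
at depth `j+1` whose coordinatewise binary code is `v` to its parent. -/
abbrev TreeEdge (d k : ℕ) := Fin k × Zd d

/-- The coordinatewise binary code of the depth-`j` ancestor (in the `2^d`-ary tree of height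
`k`) of the leaf corresponding to the lattice point `x ∈ Δ_k`; the code of a depth-`j`
vertex consists of the `j` most significant base-2 digits of each coordinate of `x + 2^(k-1)`. -/
def ancestorCode (d k j : ℕ) (x : Zd d) : Zd d := fun i => (x i + 2 ^ (k - 1)) / 2 ^ (k - j)

/-- The discrete fractal percolation set `Q_d(p;k)` determined by a configuration `ω` of
open/closed edges of the `2^d`-ary tree of height `k`: the points of `Δ_k` whose
root-to-leaf path consists of open edges only. -/
def percCluster (d k : ℕ) (ω : TreeEdge d k → Bool) : Set (Zd d) :=
  {x | x ∈ box d k ∧ ∀ j : Fin k, ω (j, ancestorCode d k ((j : ℕ) + 1) x) = true}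

/-! Both points lie in the cluster iff every edge of the union of their two root-to-leaf paths
is open, an event of probability `p ^ #edges` by independence. If `m` is the depth of the last
common ancestor, the two paths share at most `m` edges, so there are at least `2k - m` of them;
and `x`, `y` lie in one cube of side `2^(k-m)`, so `|x - y| ≤ √d 2^(k-m)`, i.e.
`p^(k-m) ≤ (|x - y|/√d)^(log₂ p)`. -/

lemma Int.abs_sub_lt_of_ediv_eq {a b n : ℤ} (hn : 0 < n) (h : a / n = b / n) : |a - b| < n := by
  have ha := Int.emod_add_mul_ediv a n
  have hb := Int.emod_add_mul_ediv b n
  rw [h] at ha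
  have := Int.emod_nonneg a hn.ne'
  have := Int.emod_nonneg b hn.ne'
  have := Int.emod_lt_of_pos a hn
  have := Int.emod_lt_of_pos b hn
  rw [abs_sub_lt_iff]
  constructor <;> linarith

section AncestorCode

variable {d k : ℕ}

lemma ancestorCode_zero (hk : 1 ≤ k) {x : Zd d} (hx : x ∈ box d k) :
    ancestorCode d k 0 x = 0 := by
  funext i
  have hpow : (2 : ℤ) ^ k = 2 ^ (k - 1) + 2 ^ (k - 1) := by
    rw [← two_mul, ← pow_succ', Nat.sub_add_cancel hk]
  simp only [ancestorCode, Nat.sub_zero, Pi.zero_apply]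
  exact Int.ediv_eq_zero_of_lt (by linarith [(hx i).1]) (by linarith [(hx i).2])

lemma abs_sub_lt_of_ancestorCode_eq {m : ℕ} {x y : Zd d}
    (h : ancestorCode d k m x = ancestorCode d k m y) (i : Fin d) :
    |x i - y i| < 2 ^ (k - m) := by
  have := Int.abs_sub_lt_of_ediv_eq (by positivity) (congrFun h i)
  rwa [add_sub_add_right_eq_sub] at this

/-- The depth of the last common ancestor of the leaves `x` and `y` of the tree of height `k`. -/
def branchDepth (d k : ℕ) (x y : Zd d) : ℕ :=
  Nat.findGreatest (fun j => ancestorCode d k j x = ancestorCode d k j y) k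

lemma branchDepth_le (x y : Zd d) : branchDepth d k x y ≤ k :=
  Nat.findGreatest_le k

lemma ancestorCode_branchDepth (hk : 1 ≤ k) {x y : Zd d} (hx : x ∈ box d k)
    (hy : y ∈ box d k) :
    ancestorCode d k (branchDepth d k x y) x = ancestorCode d k (branchDepth d k x y) y :=
  Nat.findGreatest_spec (P := fun j => ancestorCode d k j x = ancestorCode d k j y) (Nat.zero_le k)
    (show ancestorCode d k 0 x = ancestorCode d k 0 y by
      rw [ancestorCode_zero hk hx, ancestorCode_zero hk hy])

lemma ancestorCode_ne_of_branchDepth_lt {j : ℕ} {x y : Zd d} (hj : branchDepth d k x y < j)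
    (hjk : j ≤ k) : ancestorCode d k j x ≠ ancestorCode d k j y :=
  Nat.findGreatest_is_greatest hj hjk

end AncestorCode

section PathEdges

variable {d k : ℕ}

def pathEdges (d k : ℕ) (x : Zd d) : Finset (TreeEdge d k) :=
  Finset.univ.image fun j : Fin k => (j, ancestorCode d k ((j : ℕ) + 1) x)

lemma mem_pathEdges {x : Zd d} {e : TreeEdge d k} :
    e ∈ pathEdges d k x ↔ e.2 = ancestorCode d k ((e.1 : ℕ) + 1) x := by
  constructor
  · intro h
    obtain ⟨j, -, rfl⟩ := Finset.mem_image.mp h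
    rfl
  · intro h
    exact Finset.mem_image.mpr ⟨e.1, Finset.mem_univ _, Prod.ext rfl h.symm⟩

lemma card_pathEdges (x : Zd d) : (pathEdges d k x).card = k := by
  rw [pathEdges, Finset.card_image_of_injective _ fun i j h => congrArg Prod.fst h,
    Finset.card_univ, Fintype.card_fin]

lemma mem_percCluster_iff {ω : TreeEdge d k → Bool} {x : Zd d} (hx : x ∈ box d k) :
    x ∈ percCluster d k ω ↔ ∀ e ∈ pathEdges d k x, ω e = true := by
  simp only [percCluster, Set.mem_ofPred_eq, hx, true_and, pathEdges, Finset.mem_image,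
    Finset.mem_univ, forall_exists_index, forall_apply_eq_imp_iff]

lemma card_inter_pathEdges_le (x y : Zd d) :
    (pathEdges d k x ∩ pathEdges d k y).card ≤ branchDepth d k x y := by
  calc (pathEdges d k x ∩ pathEdges d k y).card
      ≤ (Finset.range (branchDepth d k x y)).card := by
        refine Finset.card_le_card_of_injOn (fun e => (e.1 : ℕ)) ?_ ?_
        · intro e he
          rw [Finset.coe_inter, Set.mem_inter_iff, Finset.mem_coe, Finset.mem_coe,
            mem_pathEdges, mem_pathEdges] at he
          rw [Finset.coe_range, Set.mem_Iio]
          by_contra! hle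
          exact ancestorCode_ne_of_branchDepth_lt (by omega) e.1.isLt (he.1.symm.trans he.2)
        · intro e he e' he' hee'
          have hfst : e.1 = e'.1 := Fin.ext hee'
          rw [Finset.coe_inter, Set.mem_inter_iff, Finset.mem_coe, mem_pathEdges] at he he'
          exact Prod.ext hfst (by rw [he.1, he'.1, hfst])
    _ = branchDepth d k x y := Finset.card_range _

lemma card_union_pathEdges (x y : Zd d) :
    k + (k - branchDepth d k x y) ≤ (pathEdges d k x ∪ pathEdges d k y).card := by
  have := Finset.card_union_add_card_inter (pathEdges d k x) (pathEdges d k y)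
  have := card_inter_pathEdges_le (k := k) x y
  have := branchDepth_le (k := k) x y
  rw [card_pathEdges, card_pathEdges] at *
  omega

end PathEdges

lemma zdist_le_sqrt_mul {d : ℕ} {x y : Zd d} {c : ℝ} (hc : 0 ≤ c)
    (h : ∀ i, |((x i - y i : ℤ) : ℝ)| ≤ c) : zdist x y ≤ Real.sqrt d * c := by
  calc zdist x y ≤ Real.sqrt (d * c ^ 2) := by
        refine Real.sqrt_le_sqrt ?_
        calc ∑ i, ((x i - y i : ℤ) : ℝ) ^ 2 ≤ Finset.univ.card • c ^ 2 :=
              Finset.sum_le_card_nsmul _ _ _ fun i _ =>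
                sq_le_sq' (abs_le.mp (h i)).1 (abs_le.mp (h i)).2
          _ = d * c ^ 2 := by rw [Finset.card_univ, Fintype.card_fin, nsmul_eq_mul]
    _ = Real.sqrt d * c := by rw [Real.sqrt_mul (Nat.cast_nonneg d), Real.sqrt_sq hc]

lemma zdist_pos {d : ℕ} {x y : Zd d} (h : x ≠ y) : 0 < zdist x y := by
  obtain ⟨i, hi⟩ := Function.ne_iff.mp h
  refine Real.sqrt_pos.mpr (Finset.sum_pos' (fun i _ => sq_nonneg _) ⟨i, Finset.mem_univ i, ?_⟩)
  have : ((x i - y i : ℤ) : ℝ) ≠ 0 := by exact_mod_cast sub_ne_zero.mpr hi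
  positivity

lemma pow_le_rpow_logb {p r : ℝ} {n : ℕ} (hp : p ∈ Set.Ioc (0 : ℝ) 1) (hr : 0 < r)
    (hrn : r ≤ 2 ^ n) : p ^ n ≤ r ^ Real.logb 2 p := by
  calc p ^ n = ((2 : ℝ) ^ n) ^ Real.logb 2 p := by
        rw [← Real.rpow_pow_comm zero_le_two, Real.rpow_logb two_pos (by norm_num) hp.1]
    _ ≤ r ^ Real.logb 2 p :=
        Real.rpow_le_rpow_of_nonpos hr hrn (Real.logb_nonpos one_lt_two hp.1.le hp.2)

lemma measure_forall_eq_true {ι Ω : Type*} {mΩ : MeasurableSpace Ω} {P : Measure Ω}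
    {X : ι → Ω → Bool} (hindep : iIndepFun X P) {q : ℝ≥0∞}
    (hmarg : ∀ e, P {ω | X e ω = true} = q) (S : Finset ι) :
    P {ω | ∀ e ∈ S, X e ω = true} = q ^ S.card := by
  have hset : {ω | ∀ e ∈ S, X e ω = true} = ⋂ e ∈ S, X e ⁻¹' {true} := by
    ext ω
    simp
  rw [hset, hindep.meas_biInter fun e _ => ⟨{true}, measurableSet_singleton true, rfl⟩]
  exact (Finset.prod_congr rfl fun e _ => hmarg e).trans (Finset.prod_const q)

theorem statement7_general (d k : ℕ) (hd : 1 ≤ d) (hk : 1 ≤ k) (p : ℝ) (hp : p ∈ Set.Ioc (0:ℝ) 1)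
    (Ω : Type) (mΩ : MeasurableSpace Ω) (P : Measure Ω)
    (X : TreeEdge d k → Ω → Bool)
    (hindep : iIndepFun X P)
    (hmarg : ∀ e, P {ω | X e ω = true} = ENNReal.ofReal p)
    (x y : Zd d) (hx : x ∈ box d k) (hy : y ∈ box d k) (hxy : x ≠ y) :
    P {ω | x ∈ percCluster d k (fun e => X e ω) ∧ y ∈ percCluster d k fun e => X e ω} ≤
      ENNReal.ofReal (p ^ k * (zdist x y / Real.sqrt d) ^ Real.logb 2 p) := by
  set m := branchDepth d k x y
  have hsqrt_d : 0 < Real.sqrt d := Real.sqrt_pos.mpr (by exact_mod_cast hd)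
  have hdist : zdist x y / Real.sqrt d ≤ 2 ^ (k - m) := by
    rw [div_le_iff₀ hsqrt_d, mul_comm]
    refine zdist_le_sqrt_mul (by positivity) fun i => ?_
    exact_mod_cast (abs_sub_lt_of_ancestorCode_eq (ancestorCode_branchDepth hk hx hy) i).le
  have hevent : {ω | x ∈ percCluster d k (fun e => X e ω) ∧ y ∈ percCluster d k fun e => X e ω}
      = {ω | ∀ e ∈ pathEdges d k x ∪ pathEdges d k y, X e ω = true} := by
    ext ω
    simp only [Set.mem_ofPred_eq, mem_percCluster_iff hx, mem_percCluster_iff hy,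
      Finset.forall_mem_union]
  rw [hevent, measure_forall_eq_true hindep hmarg, ← ENNReal.ofReal_pow hp.1.le]
  refine ENNReal.ofReal_le_ofReal ?_
  calc p ^ (pathEdges d k x ∪ pathEdges d k y).card ≤ p ^ (k + (k - m)) :=
        pow_le_pow_of_le_one hp.1.le hp.2 (card_union_pathEdges x y)
    _ = p ^ k * p ^ (k - m) := pow_add p k (k - m)
    _ ≤ p ^ k * (zdist x y / Real.sqrt d) ^ Real.logb 2 p :=
        mul_le_mul_of_nonneg_left
          (pow_le_rpow_logb hp (div_pos (zdist_pos hxy) hsqrt_d) hdist) (pow_nonneg hp.1.le k)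

/-- For distinct points `x, y` of `Δ_k`, the discrete fractal percolation
with parameter `p ∈ (0,1]` at depth `k` satisfies
`P(x, y ∈ Q_d(p;k)) ≤ p^(k + log₂|x-y| - (1/2)log₂ d) = p^k (|x-y|/√d)^(log₂ p)`. -/
theorem statement7 (d k : ℕ) (hd : 1 ≤ d) (hk : 1 ≤ k) (p : ℝ) (hp : p ∈ Set.Ioc (0:ℝ) 1)
    (Ω : Type) (mΩ : MeasurableSpace Ω) (P : Measure Ω) (hP : IsProbabilityMeasure P)
    (X : TreeEdge d k → Ω → Bool) (hmeas : ∀ e, Measurable (X e))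
    (hindep : iIndepFun X P)
    (hmarg : ∀ e, P {ω | X e ω = true} = ENNReal.ofReal p)
    (x y : Zd d) (hx : x ∈ box d k) (hy : y ∈ box d k) (hxy : x ≠ y) :
    P {ω | x ∈ percCluster d k (fun e => X e ω) ∧ y ∈ percCluster d k fun e => X e ω} ≤
      ENNReal.ofReal (p ^ k * (zdist x y / Real.sqrt d) ^ Real.logb 2 p) :=
  statement7_general d k hd hk p hp Ω mΩ P X hindep hmarg x y hx hy hxy
end
end

section
/- Let d ≥ 1 and let p, q ∈ (0,1) satisfy p, q > 2^{−d} and β := −log₂(2^d p q) > 0. Then there exists a constant c > 0 depending only on d, p, q such that the following holds. Let 1 ≤ m ≤ n, let A ⊆ [−2^{n−1} − 2^{m−1}, 2^{n−1} + 2^{m−1})^d ∩ ℤ^d be a nonempty finite set, and let (a_{ij})_{1 ≤ i ≤ 2^{dm}, 1 ≤ j ≤ 2^{dn}} be any nonnegative coefficients with a_{ij} = 0 whenever i⊕j ∉ A and Σ_{i,j} a_{ij} = 1. Then (2^d p)^{max(log₂(diam(A) ∨ 1), m)} · Σ_{i,i',j,j'} a_{ij} a_{i'j'} p^{h^m_{ii'}}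 q^{h^n_{jj'}} ≥ c·p^m · Σ_{i,i',j,j'} a_{ij} a_{i'j'} (|i⊕j − i'⊕j'| ∨ 1)^{−β}. -/
open MeasureTheory ProbabilityTheory Set Pointwise
open scoped ENNReal Classical

noncomputable section

/-- The `t`-th leaf (`0`-indexed, `t < 2^(d*k)`) of the `2^d`-ary tree of height `k` in the
lexicographic order of digit strings, as a point of `Δ_k`: the digit string of the leaf,
read as a base-2 expansion (most significant symbol first, coordinates ordered within each
symbol), is the binary expansion of `t`. -/
def leafOfIdx (d k : ℕ) (t : ℕ) : Zd d :=
  fun i => ((∑ j ∈ Finset.range k,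
      (t / 2 ^ (d * (k - 1 - j) + (d - 1 - (i : ℕ)))) % 2 * 2 ^ (k - 1 - j) : ℕ) : ℤ)
    - 2 ^ (k - 1)

/-- The depth of the most recent common ancestor of the leaves of `x, y ∈ Δ_k` in the
`2^d`-ary tree of height `k`, i.e. the length of the common prefix of their digit strings. -/
def commonDepth (d k : ℕ) (x y : Zd d) : ℕ :=
  (Finset.range (k + 1)).sup fun ℓ => if ancestorCode d k ℓ x = ancestorCode d k ℓ y then ℓ else 0

/-- The graph distance from the leaf of `x` to the most recent common ancestor of the leaves
of `x, y ∈ Δ_k` in the `2^d`-ary tree of height `k`. -/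
def treeDist (d k : ℕ) (x y : Zd d) : ℕ := k - commonDepth d k x y

/-!
Put `x = 2^d p q < 1` and `r = 2^d p > 1`. Up to the factor `x⁻¹`, the Riesz kernel
`(|u| ∨ 1)^(log₂ x)` is dominated by `∑_{s ≤ T} x^s 1{|u| ≤ 2^s}`, where `2^T ≈ diam A ∨ 2^m`
bounds all distances in `A`. At scale `s`, if `|i⊕j - i'⊕j'| ≤ 2^s` then the ancestors at height
`s` of the leaves of `i, i'` (in `Γ^(m)`) and of `j, j'` (in `Γ^(n)`) have coordinate sums
differing by at most `2`, and the `Γ^(m)`-ancestors take at most `2^(d(m-s))` values. So the pair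
of ancestor codes of `(i', j')` is a translate of that of `(i, j)` by one of `O(2^(d(m-s)))`
vectors, and by Cauchy–Schwarz over the fibres of the code map each translate carries at most the
mass of pairs with equal codes, i.e. with `h^m, h^n ≤ s`. Summing over `s`, the scales below `m`
form a geometric series in `pq` and those above `m` one in `r`, dominated by its top term `r^T`.
-/

open Finset

lemma ite_one_zero_le_of_imp {P Q : Prop} [Decidable P] [Decidable Q] (h : P → Q) :
    (if P then (1:ℝ) else 0) ≤ if Q then 1 else 0 := by
  split_ifs <;> simp_all

section PairEnergy

variable {I : Type*} [Fintype I]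

def pairEnergy (b : I → ℝ) (K : I → I → ℝ) : ℝ := ∑ z, ∑ z', b z * b z' * K z z'

lemma pairEnergy_nonneg {b : I → ℝ} (hb : ∀ z, 0 ≤ b z)
    {K : I → I → ℝ} (hK : ∀ z z', 0 ≤ K z z') : 0 ≤ pairEnergy b K :=
  sum_nonneg fun z _ => sum_nonneg fun z' _ => mul_nonneg (mul_nonneg (hb z) (hb z')) (hK z z')

lemma pairEnergy_mono {b : I → ℝ} (hb : ∀ z, 0 ≤ b z) {K L : I → I → ℝ}
    (h : ∀ z z', b z ≠ 0 → b z' ≠ 0 → K z z' ≤ L z z') :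
    pairEnergy b K ≤ pairEnergy b L := by
  refine sum_le_sum fun z _ => sum_le_sum fun z' _ => ?_
  by_cases hz : b z = 0
  · simp [hz]
  by_cases hz' : b z' = 0
  · simp [hz']
  exact mul_le_mul_of_nonneg_left (h z z' hz hz') (mul_nonneg (hb z) (hb z'))

lemma pairEnergy_sum_mul {ι : Type*} (b : I → ℝ) (S : Finset ι) (c : ι → ℝ)
    (K : ι → I → I → ℝ) :
    pairEnergy b (fun z z' => ∑ s ∈ S, c s * K s z z')
      = ∑ s ∈ S, c s * pairEnergy b (K s) := by
  calc _ = ∑ z, ∑ s ∈ S, ∑ z', c s * (b z * b z' * K s z z') := by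
        simp only [pairEnergy, mul_sum]
        refine sum_congr rfl fun z _ => ?_
        rw [Finset.sum_comm]
        exact sum_congr rfl fun _ _ => sum_congr rfl fun _ _ => by ring
    _ = _ := by simp only [pairEnergy, mul_sum]; exact Finset.sum_comm

lemma pairEnergy_const_mul (b : I → ℝ) (c : ℝ) (K : I → I → ℝ) :
    pairEnergy b (fun z z' => c * K z z') = c * pairEnergy b K := by
  simpa using pairEnergy_sum_mul b ({()} : Finset Unit) (fun _ => c) (fun _ => K)

variable {α : Type*} [DecidableEq α]

def fiberMass (b : I → ℝ) (g : I → α) (C : α) : ℝ := ∑ z with g z = C, b z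

lemma pairEnergy_ite_eq_sum_fiberMass (b : I → ℝ) (g : I → α) (φ : α → α) :
    pairEnergy b (fun z z' => if g z' = φ (g z) then 1 else 0)
      = ∑ C ∈ (univ : Finset I).image g, fiberMass b g C * fiberMass b g (φ C) := by
  have inner : ∀ z, ∑ z', b z * b z' * (if g z' = φ (g z) then 1 else 0)
      = b z * fiberMass b g (φ (g z)) := fun z => by
    simp only [fiberMass, sum_filter, mul_sum, mul_ite, mul_one, mul_zero]
  simp only [pairEnergy, inner]
  rw [← sum_fiberwise_of_maps_to (fun z _ => mem_image_of_mem g (mem_univ z))]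
  refine sum_congr rfl fun C _ => ?_
  rw [fiberMass, sum_mul]
  exact sum_congr rfl fun z hz => by rw [(mem_filter.mp hz).2]

lemma pairEnergy_translate_le [AddCommGroup α] {b : I → ℝ} (hb : ∀ z, 0 ≤ b z)
    (g : I → α) (w : α) :
    pairEnergy b (fun z z' => if g z' = g z + w then 1 else 0)
      ≤ pairEnergy b (fun z z' => if g z' = g z then 1 else 0) := by
  set S := (univ : Finset I).image g
  set F := fiberMass b g
  have hF : ∀ C, 0 ≤ F C := fun C => sum_nonneg fun z _ => hb z
  have hF_supp : ∀ C ∉ S, F C = 0 := fun C hC => sum_eq_zero fun z hz =>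
    absurd ((mem_filter.mp hz).2 ▸ mem_image_of_mem g (mem_univ z)) hC
  have hshift : ∑ C ∈ S, F (C + w) ^ 2 ≤ ∑ C ∈ S, F C ^ 2 := by
    rw [show ∑ C ∈ S, F (C + w) ^ 2 = ∑ C ∈ S.map (addRightEmbedding w), F C ^ 2 by simp]
    rw [← sum_filter_of_ne (p := (· ∈ S)) fun C _ hC =>
      by_contra fun hCS => hC (by simp [hF_supp C hCS])]
    exact sum_le_sum_of_subset_of_nonneg (fun C hC => (mem_filter.mp hC).2) fun C _ _ => sq_nonneg _
  have hcollision : pairEnergy b (fun z z' => if g z' = g z then 1 else 0)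
      = ∑ C ∈ S, F C * F C := pairEnergy_ite_eq_sum_fiberMass b g id
  have hcs := sum_mul_sq_le_sq_mul_sq S F (fun C => F (C + w))
  rw [pairEnergy_ite_eq_sum_fiberMass b g (· + w), hcollision]
  have h1 : 0 ≤ ∑ C ∈ S, F C * F C := sum_nonneg fun C _ => mul_nonneg (hF C) (hF C)
  have h2 : 0 ≤ ∑ C ∈ S, F C * F (C + w) := sum_nonneg fun C _ => mul_nonneg (hF C) (hF _)
  simp only [sq] at hcs hshift
  nlinarith

lemma pairEnergy_sub_mem_le [AddCommGroup α] {b : I → ℝ} (hb : ∀ z, 0 ≤ b z) (g : I → α)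
    (W : Finset α) :
    pairEnergy b (fun z z' => if g z' - g z ∈ W then 1 else 0)
      ≤ #W * pairEnergy b (fun z z' => if g z' = g z then 1 else 0) := by
  have hsplit : ∀ z z', (if g z' - g z ∈ W then (1:ℝ) else 0)
      = ∑ w ∈ W, 1 * (if g z' = g z + w then 1 else 0) := fun z z' => by
    simp only [one_mul, ← sub_eq_iff_eq_add', sum_ite_eq]
  simp only [hsplit]
  rw [pairEnergy_sum_mul]
  simp only [one_mul]
  calc _ ≤ ∑ _w ∈ W, pairEnergy b (fun z z' => if g z' = g z then 1 else 0) :=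
        sum_le_sum fun w _ => pairEnergy_translate_le hb g w
    _ = _ := by rw [sum_const, nsmul_eq_mul]

lemma sum_sum_sum_sum_eq_pairEnergy {ι κ : Type*} [Fintype ι] [Fintype κ]
    (a : ι → κ → ℝ) (K : ι → ι → κ → κ → ℝ) :
    ∑ i, ∑ i', ∑ j, ∑ j', a i j * a i' j' * K i i' j j'
      = pairEnergy (fun z : ι × κ => a z.1 z.2) (fun z z' => K z.1 z'.1 z.2 z'.2) := by
  simp only [pairEnergy, Fintype.sum_prod_type]
  exact sum_congr rfl fun i _ => Finset.sum_comm

end PairEnergy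

section TreeCodes

variable {d : ℕ}

lemma leafOfIdx_add_mem_Ico (k t : ℕ) (i : Fin d) :
    leafOfIdx d k t i + 2 ^ (k - 1) ∈ Set.Ico (0:ℤ) (2 ^ k) := by
  have hdigits : ∑ j ∈ range k, (t / 2 ^ (d * (k - 1 - j) + (d - 1 - (i : ℕ)))) % 2
      * 2 ^ (k - 1 - j) < 2 ^ k :=
    calc _ ≤ ∑ j ∈ range k, 2 ^ (k - 1 - j) :=
          sum_le_sum fun j _ => mul_le_of_le_one_left (Nat.zero_le _)
            (Nat.le_of_lt_succ (Nat.mod_lt _ two_pos))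
      _ = ∑ j ∈ range k, 2 ^ j := sum_range_reflect (2 ^ ·) k
      _ < 2 ^ k := by rw [Nat.geomSum_eq le_rfl]; have := Nat.one_le_two_pow (n := k); omega
  simp only [leafOfIdx, sub_add_cancel, Set.mem_Ico]
  exact ⟨by positivity, by exact_mod_cast hdigits⟩

-- Equals `ancestorCode d k (k - s) x` for `s ≤ k`; dividing by `2 ^ s` directly lets the codes
-- of trees of different heights be compared at the same scale.
def codeAtHeight (k s : ℕ) (x : Zd d) : Zd d := fun i => (x i + 2 ^ (k - 1)) / 2 ^ s

lemma le_commonDepth_of_ancestorCode_eq {k ℓ : ℕ} (hℓ : ℓ ≤ k) {x y : Zd d}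
    (h : ancestorCode d k ℓ x = ancestorCode d k ℓ y) : ℓ ≤ commonDepth d k x y := by
  have := le_sup (mem_range.mpr (Nat.lt_succ_of_le hℓ))
    (f := fun ℓ => if ancestorCode d k ℓ x = ancestorCode d k ℓ y then ℓ else 0)
  simpa [h, commonDepth] using this

lemma treeDist_le_of_codeAtHeight_eq {k s : ℕ} {x y : Zd d}
    (h : codeAtHeight k s x = codeAtHeight k s y) : treeDist d k x y ≤ s := by
  rcases le_total k s with hks | hsk
  · exact (Nat.sub_le _ _).trans hks
  · have hcode : ancestorCode d k (k - s) x = ancestorCode d k (k - s) y := by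
      unfold ancestorCode
      rw [Nat.sub_sub_self hsk]
      exact h
    have := le_commonDepth_of_ancestorCode_eq (Nat.sub_le k s) hcode
    unfold treeDist
    omega

lemma codeAtHeight_mem_Ico {k s : ℕ} {x : Zd d} {i : Fin d}
    (hx : x i + 2 ^ (k - 1) ∈ Set.Ico (0:ℤ) (2 ^ k)) :
    codeAtHeight k s x i ∈ Set.Ico (0:ℤ) (2 ^ (k - s)) := by
  refine ⟨Int.ediv_nonneg hx.1 (by positivity), (Int.ediv_lt_iff_lt_mul (by positivity)).2 ?_⟩
  calc _ < (2:ℤ) ^ k := hx.2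
    _ ≤ 2 ^ (k - s + s) := pow_le_pow_right₀ (by norm_num) (by omega)
    _ = _ := pow_add ..

lemma abs_ediv_add_ediv_sub_le {u : ℤ} (hu : 0 < u) {a b a' b' : ℤ}
    (h : |a + b - (a' + b')| ≤ u) : |a / u + b / u - (a' / u + b' / u)| ≤ 2 := by
  have := Int.ediv_mul_le a hu.ne'
  have := Int.ediv_mul_le b hu.ne'
  have := Int.ediv_mul_le a' hu.ne'
  have := Int.ediv_mul_le b' hu.ne'
  have := Int.lt_ediv_add_one_mul_self a hu
  have := Int.lt_ediv_add_one_mul_self b hu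
  have := Int.lt_ediv_add_one_mul_self a' hu
  have := Int.lt_ediv_add_one_mul_self b' hu
  rw [abs_le] at h ⊢
  constructor <;> by_contra! hc <;> nlinarith

lemma abs_sub_apply_le_of_zdist_le {x y : Zd d} {s : ℕ} (h : zdist x y ≤ 2 ^ s) (i : Fin d) :
    |x i - y i| ≤ 2 ^ s := by
  have hi : ((|x i - y i| : ℤ) : ℝ) ≤ zdist x y := by
    rw [Int.cast_abs, zdist, ← Real.sqrt_sq_eq_abs]
    exact Real.sqrt_le_sqrt (single_le_sum (f := fun j => ((x j - y j : ℤ) : ℝ) ^ 2)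
      (fun j _ => sq_nonneg _) (mem_univ i))
  exact_mod_cast hi.trans h

lemma zdist_le_zdiam {A : Set (Zd d)} (hA : A.Finite) {x y : Zd d} (hx : x ∈ A)
    (hy : y ∈ A) : zdist x y ≤ zdiam A := by
  refine le_csSup (((hA.prod hA).image fun w => zdist w.1 w.2).subset ?_).bddAbove
    ⟨x, hx, y, hy, rfl⟩
  rintro r ⟨x, hx, y, hy, rfl⟩
  exact ⟨(x, y), Set.mk_mem_prod hx hy, rfl⟩

def cube (R : ℤ) : Finset (Zd d) := Fintype.piFinset fun _ => Finset.Icc (-R) R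

lemma card_cube (R : ℤ) : #(cube (d := d) R) = (2 * R + 1).toNat ^ d := by
  simp only [cube, Fintype.card_piFinset, Int.card_Icc, prod_const, card_univ, Fintype.card_fin]
  congr 2
  ring

end TreeCodes

section Scales

variable {d : ℕ}

-- The pairs `(δ, δ')` with `|δ| ≤ 2 ^ (m - s)` and `|δ + δ'| ≤ 2` coordinatewise.
def scaleDisplacements (m s : ℕ) : Finset (Zd d × Zd d) :=
  (cube (2 ^ (m - s)) ×ˢ cube 2).image fun w => (w.1, w.2 - w.1)

lemma card_scaleDisplacements_le (m s : ℕ) :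
    (#(scaleDisplacements (d := d) m s) : ℝ) ≤ 15 ^ d * 2 ^ (d * (m - s)) := by
  have hcard : #(scaleDisplacements (d := d) m s)
      ≤ #(cube (d := d) (2 ^ (m - s))) * #(cube (d := d) 2) :=
    card_image_le.trans (card_product _ _).le
  rw [card_cube, card_cube, show (2 * 2 ^ (m - s) + 1 : ℤ) = ((2 * 2 ^ (m - s) + 1 : ℕ) : ℤ)
    by push_cast; ring, Int.toNat_natCast] at hcard
  calc (#(scaleDisplacements (d := d) m s) : ℝ) ≤ (2 * 2 ^ (m - s) + 1) ^ d * 5 ^ d := by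
        exact_mod_cast hcard
    _ ≤ (3 * 2 ^ (m - s)) ^ d * 5 ^ d := by
        gcongr
        linarith [one_le_pow₀ (M₀ := ℝ) (n := m - s) one_le_two]
    _ = _ := by
        rw [mul_pow, pow_mul', show (15:ℝ) ^ d = 3 ^ d * 5 ^ d by rw [← mul_pow]; norm_num]
        ring

lemma codeAtHeight_sub_mem_scaleDisplacements {m n s : ℕ} {x x' y y' : Zd d}
    (hx : ∀ i, x i + 2 ^ (m - 1) ∈ Set.Ico (0:ℤ) (2 ^ m))
    (hx' : ∀ i, x' i + 2 ^ (m - 1) ∈ Set.Ico (0:ℤ) (2 ^ m))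
    (h : zdist (x + y) (x' + y') ≤ 2 ^ s) :
    (codeAtHeight m s x', codeAtHeight n s y') - (codeAtHeight m s x, codeAtHeight n s y)
      ∈ scaleDisplacements m s := by
  set u := codeAtHeight m s x
  set u' := codeAtHeight m s x'
  set v := codeAtHeight n s y
  set v' := codeAtHeight n s y'
  refine mem_image.2 ⟨(u' - u, u' + v' - (u + v)), mem_product.2 ⟨?_, ?_⟩, ?_⟩
  · refine Fintype.mem_piFinset.2 fun i => Finset.mem_Icc.2 ?_
    have hu := codeAtHeight_mem_Ico (s := s) (hx i)
    have hu' := codeAtHeight_mem_Ico (s := s) (hx' i)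
    simp only [Set.mem_Ico, Pi.sub_apply] at hu hu' ⊢
    constructor <;> linarith
  · refine Fintype.mem_piFinset.2 fun i => Finset.mem_Icc.2 (abs_le.1 ?_)
    refine abs_ediv_add_ediv_sub_le (by positivity) ?_
    rw [← abs_neg]
    convert abs_sub_apply_le_of_zdist_le h i using 2
    simp only [Pi.add_apply]
    ring
  · ext <;> simp; ring

lemma pairEnergy_zdist_le_two_pow_le {I : Type*} [Fintype I] {m n s : ℕ} {b : I → ℝ}
    (hb : ∀ z, 0 ≤ b z) (xm xn : I → Zd d)
    (hxm : ∀ z i, xm z i + 2 ^ (m - 1) ∈ Set.Ico (0:ℤ) (2 ^ m)) :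
    pairEnergy b (fun z z' => if zdist (xm z + xn z) (xm z' + xn z') ≤ 2 ^ s then 1 else 0)
      ≤ 15 ^ d * 2 ^ (d * (m - s)) * pairEnergy b (fun z z' =>
          if max (treeDist d m (xm z) (xm z')) (treeDist d n (xn z) (xn z')) ≤ s
          then 1 else 0) := by
  set g : I → Zd d × Zd d := fun z => (codeAtHeight m s (xm z), codeAtHeight n s (xn z))
  calc _ ≤ pairEnergy b (fun z z' => if g z' - g z ∈ scaleDisplacements m s then 1 else 0) :=
        pairEnergy_mono hb fun z z' _ _ => ite_one_zero_le_of_imp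
          (codeAtHeight_sub_mem_scaleDisplacements (hxm z) (hxm z'))
    _ ≤ #(scaleDisplacements m s) * pairEnergy b (fun z z' => if g z' = g z then 1 else 0) :=
        pairEnergy_sub_mem_le hb g _
    _ ≤ _ := by
        refine mul_le_mul (card_scaleDisplacements_le m s) (pairEnergy_mono hb fun z z' _ _ =>
          ite_one_zero_le_of_imp fun hg => ?_) (pairEnergy_nonneg hb fun _ _ => by positivity)
          (by positivity)
        exact max_le (treeDist_le_of_codeAtHeight_eq (congrArg Prod.fst hg).symm)
          (treeDist_le_of_codeAtHeight_eq (congrArg Prod.snd hg).symm)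

end Scales

section Scalar

open Real

lemma rpow_logb_le_sum_geom {x D : ℝ} (hx0 : 0 < x) (hx1 : x < 1) {T : ℕ}
    (hT : logb 2 (max D 1) ≤ T) :
    max D 1 ^ logb 2 x
      ≤ x⁻¹ * ∑ s ∈ range (T + 1), x ^ s * (if D ≤ 2 ^ s then 1 else 0) := by
  set y := logb 2 (max D 1)
  have hy : 0 ≤ y := logb_nonneg one_lt_two (le_max_right _ _)
  have hD : max D 1 = 2 ^ y := (rpow_logb two_pos one_lt_two.ne' (by positivity)).symm
  -- the single scale `s = ⌈y⌉₊` already accounts for the kernel, up to the factor `x⁻¹`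
  have hDs : D ≤ 2 ^ ⌈y⌉₊ :=
    calc D ≤ 2 ^ y := hD ▸ le_max_left _ _
      _ ≤ 2 ^ (⌈y⌉₊ : ℝ) := rpow_le_rpow_of_exponent_le one_le_two (Nat.le_ceil y)
      _ = 2 ^ ⌈y⌉₊ := rpow_natCast _ _
  calc max D 1 ^ logb 2 x = x ^ y := by
        rw [hD, ← rpow_mul zero_le_two, mul_comm, rpow_mul zero_le_two, rpow_logb two_pos
          one_lt_two.ne' hx0]
    _ ≤ x ^ ((⌈y⌉₊ : ℝ) - 1) :=
        rpow_le_rpow_of_exponent_ge hx0 hx1.le (by linarith [Nat.ceil_lt_add_one hy])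
    _ = x⁻¹ * (x ^ ⌈y⌉₊ * if D ≤ 2 ^ ⌈y⌉₊ then 1 else 0) := by
        rw [rpow_sub_one hx0.ne', rpow_natCast, if_pos hDs, mul_one, div_eq_inv_mul]
    _ ≤ _ := mul_le_mul_of_nonneg_left (single_le_sum
        (f := fun s => x ^ s * if D ≤ 2 ^ s then 1 else 0)
        (fun s _ => mul_nonneg (pow_nonneg hx0.le _) (by split_ifs <;> norm_num))
        (mem_range.2 (Nat.lt_succ_of_le (Nat.ceil_le.2 hT)))) (inv_nonneg.2 hx0.le)

lemma sum_range_pow_le_of_one_lt {r : ℝ} (hr : 1 < r) (T : ℕ) :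
    ∑ s ∈ range (T + 1), r ^ s ≤ r ^ T * (r / (r - 1)) := by
  rw [geom_sum_eq hr.ne', pow_succ, ← mul_div_assoc]
  exact div_le_div_of_nonneg_right (by linarith) (by linarith)

lemma scale_weight_le {d m T h₁ h₂ s : ℕ} {p q : ℝ} (hp : p ∈ Set.Ioo (0:ℝ) 1)
    (hq : q ∈ Set.Ioo (0:ℝ) 1) (hr : 1 < 2 ^ d * p) (hh₁ : h₁ ≤ m) (hmT : m ≤ T)
    (hh₂ : h₂ ≤ s) :
    (2 ^ d * p * q) ^ s * 2 ^ (d * (m - s))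
      ≤ (2 ^ d * p) ^ T * (p ^ m)⁻¹ * (p * q) ^ s
        + (2 ^ d * p) ^ s * ((p ^ m)⁻¹ * (p ^ h₁ * q ^ h₂)) := by
  obtain ⟨hp0, hp1⟩ := hp
  obtain ⟨hq0, hq1⟩ := hq
  rcases lt_or_ge s m with hsm | hms
  · have h2 : (2:ℝ) ^ (d * s) * 2 ^ (d * (m - s)) = 2 ^ (d * m) := by
      rw [← pow_add, ← mul_add, Nat.add_sub_cancel' hsm.le]
    calc (2 ^ d * p * q) ^ s * 2 ^ (d * (m - s))
        = 2 ^ (d * s) * 2 ^ (d * (m - s)) * (p * q) ^ s := by rw [pow_mul]; ring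
      _ = (2 ^ d * p) ^ m * (p ^ m)⁻¹ * (p * q) ^ s := by
          rw [h2, pow_mul, mul_pow (2 ^ d) p m, mul_inv_cancel_right₀ (pow_ne_zero _ hp0.ne')]
      _ ≤ (2 ^ d * p) ^ T * (p ^ m)⁻¹ * (p * q) ^ s := by
          gcongr
          exact hr.le
      _ ≤ _ := le_add_of_nonneg_right (by positivity)
  · have hq_le : q ^ s ≤ (p ^ m)⁻¹ * p ^ h₁ * q ^ h₂ :=
      (pow_le_pow_of_le_one hq0.le hq1.le hh₂).trans <| le_mul_of_one_le_left (by positivity)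
        ((le_inv_mul_iff₀ (by positivity)).2
          (by simpa using pow_le_pow_of_le_one hp0.le hp1.le hh₁))
    calc (2 ^ d * p * q) ^ s * 2 ^ (d * (m - s)) = (2 ^ d * p) ^ s * q ^ s := by
          rw [Nat.sub_eq_zero_of_le hms, mul_zero, pow_zero, mul_one, mul_pow]
      _ ≤ (2 ^ d * p) ^ s * ((p ^ m)⁻¹ * (p ^ h₁ * q ^ h₂)) := by
          rw [← mul_assoc ((p ^ m)⁻¹)]
          gcongr
      _ ≤ _ := le_add_of_nonneg_left (by positivity)

lemma sum_scales_le {d m T h₁ h₂ : ℕ} {p q : ℝ} (hp : p ∈ Set.Ioo (0:ℝ) 1)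
    (hq : q ∈ Set.Ioo (0:ℝ) 1) (hr : 1 < 2 ^ d * p) (hh₁ : h₁ ≤ m) (hmT : m ≤ T) :
    ∑ s ∈ range (T + 1), (2 ^ d * p * q) ^ s * 2 ^ (d * (m - s)) *
        (if max h₁ h₂ ≤ s then 1 else 0)
      ≤ ((1 - p * q)⁻¹ + 2 ^ d * p / (2 ^ d * p - 1)) * (2 ^ d * p) ^ T * (p ^ m)⁻¹ *
          (p ^ h₁ * q ^ h₂) := by
  obtain ⟨hp0, hp1⟩ := hp
  obtain ⟨hq0, hq1⟩ := hq
  set r := 2 ^ d * p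
  set B := (p ^ m)⁻¹ * (p ^ h₁ * q ^ h₂)
  set S := Finset.Ico (max h₁ h₂) (T + 1)
  have hpq : p * q < 1 := by nlinarith
  have hlow : ∑ s ∈ S, (p * q) ^ s ≤ p ^ h₁ * q ^ h₂ / (1 - p * q) :=
    (geom_sum_Ico_le_of_lt_one (by positivity) hpq).trans <|
      div_le_div_of_nonneg_right (by
        rw [mul_pow]
        exact mul_le_mul (pow_le_pow_of_le_one hp0.le hp1.le (le_max_left _ _))
          (pow_le_pow_of_le_one hq0.le hq1.le (le_max_right _ _)) (by positivity)
          (by positivity)) (by linarith)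
  have hhigh : ∑ s ∈ S, r ^ s ≤ r ^ T * (r / (r - 1)) :=
    calc _ ≤ ∑ s ∈ range (T + 1), r ^ s :=
          sum_le_sum_of_subset_of_nonneg (fun s hs => Finset.mem_range.2 (Finset.mem_Ico.1 hs).2)
            fun s _ _ => by positivity
      _ ≤ _ := sum_range_pow_le_of_one_lt hr T
  calc _ = ∑ s ∈ S, (r * q) ^ s * 2 ^ (d * (m - s)) := by
        simp only [mul_ite, mul_one, mul_zero]
        rw [← sum_filter]
        congr 1
        ext s
        simp only [S, mem_filter, Finset.mem_range, Finset.mem_Ico]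
        omega
    _ ≤ ∑ s ∈ S, (r ^ T * (p ^ m)⁻¹ * (p * q) ^ s + r ^ s * B) :=
        sum_le_sum fun s hs => scale_weight_le ⟨hp0, hp1⟩ ⟨hq0, hq1⟩ hr hh₁ hmT
          (le_of_max_le_right (Finset.mem_Ico.1 hs).1)
    _ = r ^ T * (p ^ m)⁻¹ * ∑ s ∈ S, (p * q) ^ s + (∑ s ∈ S, r ^ s) * B := by
        rw [sum_add_distrib, mul_sum, sum_mul]
    _ ≤ r ^ T * (p ^ m)⁻¹ * (p ^ h₁ * q ^ h₂ / (1 - p * q))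
          + r ^ T * (r / (r - 1)) * B := by
        gcongr
    _ = _ := by ring

lemma pow_ceil_le_mul_rpow {r M : ℝ} (hr : 1 ≤ r) (hM : 0 ≤ M) :
    r ^ ⌈M⌉₊ ≤ r * r ^ M := by
  rw [← Real.rpow_natCast, mul_comm, ← Real.rpow_add_one (by positivity)]
  exact Real.rpow_le_rpow_of_exponent_le hr (Nat.ceil_lt_add_one hM).le

end Scalar

theorem pairEnergy_riesz_le {I : Type*} [Fintype I] {d m n T : ℕ} {p q : ℝ}
    (hp : p ∈ Set.Ioo (0:ℝ) 1) (hq : q ∈ Set.Ioo (0:ℝ) 1) (hr : 1 < 2 ^ d * p)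
    (hx : 2 ^ d * p * q < 1) (hmT : m ≤ T) {b : I → ℝ} (hb : ∀ z, 0 ≤ b z)
    (xm xn : I → Zd d)
    (hxm : ∀ z i, xm z i + 2 ^ (m - 1) ∈ Set.Ico (0:ℤ) (2 ^ m))
    (hT : ∀ z z', b z ≠ 0 → b z' ≠ 0 →
      Real.logb 2 (max (zdist (xm z + xn z) (xm z' + xn z')) 1) ≤ T) :
    pairEnergy b (fun z z' =>
        max (zdist (xm z + xn z) (xm z' + xn z')) 1 ^ Real.logb 2 (2 ^ d * p * q))
      ≤ (2 ^ d * p * q)⁻¹ * 15 ^ d * (((1 - p * q)⁻¹ + 2 ^ d * p / (2 ^ d * p - 1))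
          * (2 ^ d * p) ^ T * (p ^ m)⁻¹) * pairEnergy b (fun z z' =>
            p ^ treeDist d m (xm z) (xm z') * q ^ treeDist d n (xn z) (xn z')) := by
  set x := 2 ^ d * p * q
  set C := ((1 - p * q)⁻¹ + 2 ^ d * p / (2 ^ d * p - 1)) * (2 ^ d * p) ^ T * (p ^ m)⁻¹
  have hx0 : 0 < x := mul_pos (by linarith) hq.1
  calc _ ≤ pairEnergy b (fun z z' => x⁻¹ * ∑ s ∈ range (T + 1),
          x ^ s * if zdist (xm z + xn z) (xm z' + xn z') ≤ 2 ^ s then 1 else 0) :=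
        pairEnergy_mono hb fun z z' hz hz' => rpow_logb_le_sum_geom hx0 hx (hT z z' hz hz')
    _ = x⁻¹ * ∑ s ∈ range (T + 1), x ^ s * pairEnergy b (fun z z' =>
          if zdist (xm z + xn z) (xm z' + xn z') ≤ 2 ^ s then 1 else 0) := by
        rw [pairEnergy_const_mul, pairEnergy_sum_mul]
    _ ≤ x⁻¹ * ∑ s ∈ range (T + 1), x ^ s * (15 ^ d * 2 ^ (d * (m - s)) * pairEnergy b
          (fun z z' => if max (treeDist d m (xm z) (xm z')) (treeDist d n (xn z) (xn z')) ≤ s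
            then 1 else 0)) := by
        gcongr with s
        exact pairEnergy_zdist_le_two_pow_le hb xm xn hxm
    _ = x⁻¹ * 15 ^ d * pairEnergy b (fun z z' =>
          ∑ s ∈ range (T + 1), x ^ s * 2 ^ (d * (m - s)) *
            if max (treeDist d m (xm z) (xm z')) (treeDist d n (xn z) (xn z')) ≤ s
            then 1 else 0) := by
        simp only [pairEnergy_sum_mul, mul_sum]
        exact sum_congr rfl fun s _ => by ring
    _ ≤ x⁻¹ * 15 ^ d * pairEnergy b (fun z z' =>
          C * (p ^ treeDist d m (xm z) (xm z') * q ^ treeDist d n (xn z) (xn z'))) :=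
        mul_le_mul_of_nonneg_left (pairEnergy_mono hb fun z z' _ _ =>
          sum_scales_le hp hq hr (Nat.sub_le _ _) hmT) (by positivity)
    _ = _ := by rw [pairEnergy_const_mul]; ring

theorem riesz_energy_le_tree_energy {ι κ : Type*} [Fintype ι] [Fintype κ]
    {d m n : ℕ} {p q : ℝ} (hp : p ∈ Set.Ioo (0:ℝ) 1) (hq : q ∈ Set.Ioo (0:ℝ) 1)
    (hr : 1 < 2 ^ d * p) (hx : 2 ^ d * p * q < 1) {A : Set (Zd d)} (hA : A.Finite)
    (a : ι → κ → ℝ) (ha : ∀ i j, 0 ≤ a i j) (xm : ι → Zd d) (xn : κ → Zd d)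
    (hxm : ∀ i k, xm i k + 2 ^ (m - 1) ∈ Set.Ico (0:ℤ) (2 ^ m))
    (hsupp : ∀ i j, xm i + xn j ∉ A → a i j = 0) :
    2 ^ d * p * q / (15 ^ d * ((1 - p * q)⁻¹ + 2 ^ d * p / (2 ^ d * p - 1)) * (2 ^ d * p))
        * p ^ m * (∑ i, ∑ i', ∑ j, ∑ j', a i j * a i' j' *
          max (zdist (xm i + xn j) (xm i' + xn j')) 1 ^ Real.logb 2 (2 ^ d * p * q))
      ≤ (2 ^ d * p) ^ max (Real.logb 2 (max (zdiam A) 1)) (m : ℝ) *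
          (∑ i, ∑ i', ∑ j, ∑ j', a i j * a i' j' *
            (p ^ treeDist d m (xm i) (xm i') * q ^ treeDist d n (xn j) (xn j'))) := by
  rw [sum_sum_sum_sum_eq_pairEnergy, sum_sum_sum_sum_eq_pairEnergy]
  set r := 2 ^ d * p
  set K := (1 - p * q)⁻¹ + r / (r - 1)
  set M := max (Real.logb 2 (max (zdiam A) 1)) m
  set b : ι × κ → ℝ := fun z => a z.1 z.2
  set E := pairEnergy b fun z z' =>
    p ^ treeDist d m (xm z.1) (xm z'.1) * q ^ treeDist d n (xn z.2) (xn z'.2)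
  have hp0 := hp.1
  have hq0 := hq.1
  have hK : 0 < K := add_pos (inv_pos.2 (by nlinarith [hp.2, hq.2]))
    (div_pos (by linarith) (by linarith))
  have hM : 0 ≤ M := le_max_of_le_right (Nat.cast_nonneg m)
  have hE : 0 ≤ E := pairEnergy_nonneg (fun z => ha _ _) fun _ _ => by positivity
  have hmem : ∀ z : ι × κ, b z ≠ 0 → xm z.1 + xn z.2 ∈ A :=
    fun z hz => by_contra fun h => hz (hsupp _ _ h)
  have hT : ∀ z z' : ι × κ, b z ≠ 0 → b z' ≠ 0 →
      Real.logb 2 (max (zdist (xm z.1 + xn z.2) (xm z'.1 + xn z'.2)) 1) ≤ ⌈M⌉₊ :=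
    fun z z' hz hz' => (Real.logb_le_logb_of_le one_lt_two (by positivity) (max_le_max_right 1
      (zdist_le_zdiam hA (hmem z hz) (hmem z' hz')))).trans
      ((le_max_left _ _).trans (Nat.le_ceil M))
  have key := pairEnergy_riesz_le (I := ι × κ) (n := n) hp hq hr hx
    (Nat.cast_le.1 ((le_max_right _ _).trans (Nat.le_ceil M))) (fun z => ha z.1 z.2)
    (fun z => xm z.1) (fun z => xn z.2) (fun z => hxm z.1) hT
  calc _ ≤ r * q / (15 ^ d * K * r) * p ^ m *
        ((r * q)⁻¹ * 15 ^ d * (K * r ^ ⌈M⌉₊ * (p ^ m)⁻¹) * E) :=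
        mul_le_mul_of_nonneg_left key (by positivity)
    _ = r ^ ⌈M⌉₊ / r * E := by field_simp
    _ ≤ r ^ M * E := by
        gcongr
        rw [div_le_iff₀ (by positivity), mul_comm]
        exact pow_ceil_le_mul_rpow hr.le hM

/-- Coefficients are `0`-indexed, and `-β` appears as `Real.logb 2 (2 ^ d * p * q)`. -/
theorem statement10_general (d : ℕ) (p q : ℝ)
    (hp : p ∈ Set.Ioo (0:ℝ) 1) (hq : q ∈ Set.Ioo (0:ℝ) 1)
    (hpd : ((2:ℝ) ^ d)⁻¹ < p)
    (hβ : 0 < -Real.logb 2 (2 ^ d * p * q)) :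
    ∃ c : ℝ, 0 < c ∧
      ∀ (m n : ℕ), 1 ≤ m → m ≤ n →
      ∀ A : Set (Zd d), A.Nonempty → A.Finite →
        A ⊆ {x : Zd d | ∀ i, -((2:ℤ) ^ (n-1)) - 2 ^ (m-1) ≤ x i ∧
            x i < (2:ℤ) ^ (n-1) + 2 ^ (m-1)} →
      ∀ a : Fin (2 ^ (d * m)) → Fin (2 ^ (d * n)) → ℝ,
        (∀ i j, 0 ≤ a i j) →
        (∀ (i : Fin (2 ^ (d * m))) (j : Fin (2 ^ (d * n))), leafOfIdx d m (i : ℕ) + leafOfIdx d n (j : ℕ) ∉ A → a i j = 0) →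
        (∑ i, ∑ j, a i j) = 1 →
        c * p ^ m *
            (∑ i, ∑ i', ∑ j, ∑ j', a i j * a i' j' *
              (max (zdist (leafOfIdx d m (i : ℕ) + leafOfIdx d n (j : ℕ))
                  (leafOfIdx d m (i' : ℕ) + leafOfIdx d n (j' : ℕ))) 1) ^
                Real.logb 2 (2 ^ d * p * q)) ≤
          (2 ^ d * p) ^ max (Real.logb 2 (max (zdiam A) 1)) (m : ℝ) *
            (∑ i, ∑ i', ∑ j, ∑ j', a i j * a i' j' *
              p ^ treeDist d m (leafOfIdx d m (i : ℕ)) (leafOfIdx d m (i' : ℕ)) *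
              q ^ treeDist d n (leafOfIdx d n (j : ℕ)) (leafOfIdx d n (j' : ℕ))) := by
  obtain ⟨hp0, hp1⟩ := hp
  obtain ⟨hq0, hq1⟩ := hq
  have hr : 1 < 2 ^ d * p := (inv_lt_iff_one_lt_mul₀' (by positivity)).1 hpd
  have hx : 2 ^ d * p * q < 1 := by
    by_contra! h
    linarith [Real.logb_nonneg one_lt_two h]
  have hK : 0 < (1 - p * q)⁻¹ + 2 ^ d * p / (2 ^ d * p - 1) :=
    add_pos (inv_pos.2 (by nlinarith)) (div_pos (by linarith) (by linarith))
  refine ⟨2 ^ d * p * q / (15 ^ d * ((1 - p * q)⁻¹ + 2 ^ d * p / (2 ^ d * p - 1))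
      * (2 ^ d * p)),
    div_pos (by positivity) (mul_pos (mul_pos (by positivity) hK) (by linarith)),
    fun m n _ _ A _ hA _ a ha hsupp _ => ?_⟩
  simpa only [mul_assoc] using
    riesz_energy_le_tree_energy ⟨hp0, hp1⟩ ⟨hq0, hq1⟩ hr hx hA a ha
    _ _ (fun i => leafOfIdx_add_mem_Ico _ _) hsupp

/-- Deterministic comparison between the tree-energy and the Riesz energy
of a family of coefficients `(a_{ij})` supported on pairs of leaves with `i⊕j ∈ A`
(`0`-indexed here; `-β = log₂(2^d p q)`). -/
theorem statement10 (d : ℕ) (hd : 1 ≤ d) (p q : ℝ)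
    (hp : p ∈ Set.Ioo (0:ℝ) 1) (hq : q ∈ Set.Ioo (0:ℝ) 1)
    (hpd : ((2:ℝ) ^ d)⁻¹ < p) (hqd : ((2:ℝ) ^ d)⁻¹ < q)
    (hβ : 0 < -Real.logb 2 (2 ^ d * p * q)) :
    ∃ c : ℝ, 0 < c ∧
      ∀ (m n : ℕ), 1 ≤ m → m ≤ n →
      ∀ A : Set (Zd d), A.Nonempty → A.Finite →
        A ⊆ {x : Zd d | ∀ i, -((2:ℤ) ^ (n-1)) - 2 ^ (m-1) ≤ x i ∧
            x i < (2:ℤ) ^ (n-1) + 2 ^ (m-1)} →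
      ∀ a : Fin (2 ^ (d * m)) → Fin (2 ^ (d * n)) → ℝ,
        (∀ i j, 0 ≤ a i j) →
        (∀ (i : Fin (2 ^ (d * m))) (j : Fin (2 ^ (d * n))), leafOfIdx d m (i : ℕ) + leafOfIdx d n (j : ℕ) ∉ A → a i j = 0) →
        (∑ i, ∑ j, a i j) = 1 →
        c * p ^ m *
            (∑ i, ∑ i', ∑ j, ∑ j', a i j * a i' j' *
              (max (zdist (leafOfIdx d m (i : ℕ) + leafOfIdx d n (j : ℕ))
                  (leafOfIdx d m (i' : ℕ) + leafOfIdx d n (j' : ℕ))) 1) ^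
                Real.logb 2 (2 ^ d * p * q)) ≤
          (2 ^ d * p) ^ max (Real.logb 2 (max (zdiam A) 1)) (m : ℝ) *
            (∑ i, ∑ i', ∑ j, ∑ j', a i j * a i' j' *
              p ^ treeDist d m (leafOfIdx d m (i : ℕ)) (leafOfIdx d m (i' : ℕ)) *
              q ^ treeDist d n (leafOfIdx d n (j : ℕ)) (leafOfIdx d n (j' : ℕ))) :=
  statement10_general d p q hp hq hpd hβ
end
end

section
/- Let d ≥ 1 and let p, q ∈ (2^{−d}, 1) satisfy 2^d p q ≥ 1. Then there exists a constant c > 0 depending only on d, p, q such that for every 1 ≤ m ≤ n and every nonempty set A ⊆ Δ_n := [−2^{n−1}, 2^{n−1})^d ∩ ℤ^d: if 2^d p q > 1 then P((Q_d(p;m) + Q̂_d(q;n)) ∩ A ≠ ∅) ≥ c·q^{n−m}, and if 2^d p q = 1 then P((Q_d(p;m) + Q̂_d(q;n)) ∩ A ≠ ∅) ≥ c·m^{−1}·q^{n−m}. -/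
open MeasureTheory ProbabilityTheory Set Pointwise
open scoped ENNReal Classical

noncomputable section

/-!
Fix `a ∈ A`. For each `x` in a block of `2 ^ ((m - 1) * d)` points of `Δ_m` whose coordinates
have the signs of those of `a`, let `E x` be the event that the tree path to `x` is open in the
first percolation and the path to `a - x` is open in the second; then `a ∈ Q + Q̂` on `E x`, and
`P (E x) = p ^ m * q ^ n`. If `x` and `y` are at sup-distance in `[2 ^ s, 2 ^ (s + 1))`, both
pairs of paths split at least `s + 1` levels above the leaves, so
`P (E x ∩ E y) ≤ P (E x) * (p q) ^ (s + 1)`; summing over dyadic shells,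
`∑ y, P (E x ∩ E y) ≤ P (E x) * (1 + 2 ^ d * ∑ s < m, λ ^ s)` with `λ = 2 ^ d p q`.
The Chung–Erdős inequality then gives
`P (a ∈ Q + Q̂) ≥ λ ^ m q ^ (n - m) / (2 ^ d (1 + 2 ^ d ∑ s < m, λ ^ s))`,
and the geometric sum is `O (λ ^ m)` for `λ > 1` and equals `m` for `λ = 1`.
-/

namespace FractalPercolation

section SecondMoment

variable {Ω : Type*} [MeasurableSpace Ω] {P : Measure Ω}

lemma sq_lintegral_le_measure_mul_lintegral_sq {f : Ω → ℝ≥0∞} (hf : Measurable f)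
    {U : Set Ω} (hU : MeasurableSet U) (hfU : ∀ ω ∉ U, f ω = 0) :
    (∫⁻ ω, f ω ∂P) ^ 2 ≤ P U * ∫⁻ ω, f ω ^ 2 ∂P := by
  have hfg : f * U.indicator 1 = f := by
    funext ω
    by_cases hω : ω ∈ U <;> simp [hω, hfU]
  have hholder := ENNReal.lintegral_mul_le_Lp_mul_Lq P Real.HolderConjugate.two_two
    hf.aemeasurable (measurable_one.indicator hU).aemeasurable
  have hind : ∀ ω, U.indicator (1 : Ω → ℝ≥0∞) ω ^ (2 : ℝ) = U.indicator 1 ω := by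
    intro ω
    by_cases hω : ω ∈ U <;> simp [hω]
  simp only [hfg, hind, lintegral_indicator_one hU, ENNReal.rpow_two] at hholder
  have hsqrt : ∀ a : ℝ≥0∞, (a ^ (1 / 2 : ℝ)) ^ 2 = a := fun a => by
    rw [← ENNReal.rpow_natCast, ← ENNReal.rpow_mul]; norm_num
  calc (∫⁻ ω, f ω ∂P) ^ 2
      ≤ ((∫⁻ ω, f ω ^ 2 ∂P) ^ (1 / 2 : ℝ) * P U ^ (1 / 2 : ℝ)) ^ 2 :=
        pow_le_pow_left' hholder 2
    _ = P U * ∫⁻ ω, f ω ^ 2 ∂P := by rw [mul_pow, hsqrt, hsqrt, mul_comm]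

lemma lintegral_sum_indicator_one {ι : Type*} (B : Finset ι) {E : ι → Set Ω}
    (hE : ∀ i, MeasurableSet (E i)) :
    ∫⁻ ω, ∑ i ∈ B, (E i).indicator 1 ω ∂P = ∑ i ∈ B, P (E i) := by
  rw [lintegral_finsetSum _ fun i _ => measurable_one.indicator (hE i)]
  exact Finset.sum_congr rfl fun i _ => lintegral_indicator_one (hE i)

/-- The Chung–Erdős inequality. -/
theorem sq_sum_measure_le_measure_biUnion_mul {ι : Type*} (B : Finset ι) {E : ι → Set Ω}
    (hE : ∀ i, MeasurableSet (E i)) :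
    (∑ i ∈ B, P (E i)) ^ 2
      ≤ P (⋃ i ∈ B, E i) * ∑ i ∈ B, ∑ j ∈ B, P (E i ∩ E j) := by
  have hU : MeasurableSet (⋃ i ∈ B, E i) := .biUnion B.countable_toSet fun i _ => hE i
  have hcount := sq_lintegral_le_measure_mul_lintegral_sq (P := P)
    (f := fun ω => ∑ i ∈ B, (E i).indicator 1 ω)
    (Finset.measurable_sum _ fun i _ => measurable_one.indicator (hE i)) hU
    (fun ω hω => Finset.sum_eq_zero fun i hi =>
      indicator_of_notMem (fun h => hω (mem_biUnion hi h)) _)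
  have hsq : ∀ ω, (∑ i ∈ B, (E i).indicator (1 : Ω → ℝ≥0∞) ω) ^ 2
      = ∑ i ∈ B, ∑ j ∈ B, (E i ∩ E j).indicator 1 ω := fun ω => by
    simp only [sq, Finset.sum_mul_sum, inter_indicator_one, Pi.mul_apply]
  simp only [hsq] at hcount
  rwa [lintegral_sum_indicator_one B hE, lintegral_finsetSum _ fun i _ =>
      Finset.measurable_sum _ fun j _ => measurable_one.indicator ((hE i).inter (hE j)),
    Finset.sum_congr rfl fun i _ =>
      lintegral_sum_indicator_one B fun j => (hE i).inter (hE j)]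
    at hcount

theorem card_mul_le_measure_biUnion_mul {ι : Type*} {B : Finset ι} (hB : B.Nonempty)
    {E : ι → Set Ω} (hE : ∀ i, MeasurableSet (E i)) {α C : ℝ≥0∞} (hα0 : α ≠ 0)
    (hα : α ≠ ⊤) (hEα : ∀ i ∈ B, P (E i) = α)
    (hrow : ∀ i ∈ B, ∑ j ∈ B, P (E i ∩ E j) ≤ α * C) :
    B.card * α ≤ P (⋃ i ∈ B, E i) * C := by
  have hsum : ∑ i ∈ B, P (E i) = B.card * α := by
    rw [Finset.sum_congr rfl hEα, Finset.sum_const, nsmul_eq_mul]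
  have hsum2 : ∑ i ∈ B, ∑ j ∈ B, P (E i ∩ E j) ≤ B.card * α * C := by
    calc _ ≤ ∑ _i ∈ B, α * C := Finset.sum_le_sum hrow
      _ = B.card * α * C := by rw [Finset.sum_const, nsmul_eq_mul, mul_assoc]
  have hN0 : (B.card : ℝ≥0∞) * α ≠ 0 := mul_ne_zero (by simpa using hB.ne_empty) hα0
  have hNtop : (B.card : ℝ≥0∞) * α ≠ ⊤ :=
    ENNReal.mul_ne_top (ENNReal.natCast_ne_top _) hα
  refine (ENNReal.mul_le_mul_iff_left hN0 hNtop).1 ?_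
  calc B.card * α * (B.card * α) = (∑ i ∈ B, P (E i)) ^ 2 := by rw [hsum, sq]
    _ ≤ P (⋃ i ∈ B, E i) * (B.card * α * C) :=
      (sq_sum_measure_le_measure_biUnion_mul B hE).trans (mul_le_mul_right hsum2 _)
    _ = P (⋃ i ∈ B, E i) * C * (B.card * α) := by ring

end SecondMoment

lemma measure_forall_eq_true {Ω ι : Type*} [MeasurableSpace Ω] {P : Measure Ω}
    {X : ι → Ω → Bool} (hX : iIndepFun X P) (S : Finset ι) :
    P {ω | ∀ i ∈ S, X i ω = true} = ∏ i ∈ S, P {ω | X i ω = true} := by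
  have h := hX.measure_inter_preimage_eq_mul S (sets := fun _ => {true})
    fun _ _ => measurableSet_singleton _
  have hpre : ∀ i, X i ⁻¹' {true} = {ω | X i ω = true} := fun i => rfl
  simp only [hpre] at h
  rw [← h]
  congr 1; ext; simp

section TreeGeometry

variable {d k : ℕ}

lemma abs_sub_lt_of_ancestorCode_eq {j : ℕ} {x y : Zd d}
    (h : ancestorCode d k j x = ancestorCode d k j y) (i : Fin d) :
    |x i - y i| < 2 ^ (k - j) := by
  have hc : (0 : ℤ) < 2 ^ (k - j) := by positivity
  have hq := congrFun h i
  simp only [ancestorCode] at hq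
  have hx := Int.mul_ediv_add_emod (x i + 2 ^ (k - 1)) (2 ^ (k - j))
  have hy := Int.mul_ediv_add_emod (y i + 2 ^ (k - 1)) (2 ^ (k - j))
  rw [hq] at hx
  have := Int.emod_nonneg (x i + 2 ^ (k - 1)) hc.ne'
  have := Int.emod_nonneg (y i + 2 ^ (k - 1)) hc.ne'
  have := Int.emod_lt_of_pos (x i + 2 ^ (k - 1)) hc
  have := Int.emod_lt_of_pos (y i + 2 ^ (k - 1)) hc
  rw [abs_lt]
  constructor <;> linarith

def pathEdges (d k : ℕ) (x : Zd d) : Finset (TreeEdge d k) :=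
  Finset.univ.image fun j : Fin k => (j, ancestorCode d k (j + 1) x)

lemma card_pathEdges (x : Zd d) : (pathEdges d k x).card = k := by
  rw [pathEdges, Finset.card_image_of_injective _ fun j j' h => (Prod.ext_iff.1 h).1,
    Finset.card_univ, Fintype.card_fin]

lemma mem_percCluster_iff {ω : TreeEdge d k → Bool} {x : Zd d} :
    x ∈ percCluster d k ω ↔ x ∈ box d k ∧ ∀ e ∈ pathEdges d k x, ω e = true := by
  simp [percCluster, pathEdges]

/-- Two paths can only share edges above the level where the dyadic cells become smaller
than the distance of their endpoints. -/
lemma card_pathEdges_inter_le {x y : Zd d} {s : ℕ} (i : Fin d) (h : 2 ^ s ≤ |x i - y i|) :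
    (pathEdges d k x ∩ pathEdges d k y).card ≤ k - (s + 1) := by
  have hmaps : ∀ e ∈ pathEdges d k x ∩ pathEdges d k y,
      (e.1 : ℕ) ∈ Finset.range (k - (s + 1)) := by
    intro e he
    simp only [pathEdges, Finset.mem_inter, Finset.mem_image, Finset.mem_univ, true_and] at he
    obtain ⟨⟨j, rfl⟩, j', hj'⟩ := he
    obtain ⟨rfl, hcode⟩ := Prod.mk.inj hj'
    have hlt := h.trans_lt (abs_sub_lt_of_ancestorCode_eq hcode.symm i)
    have := (pow_lt_pow_iff_right₀ (by norm_num : (1 : ℤ) < 2)).1 hlt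
    simp only [Finset.mem_range]
    omega
  have hinj : Set.InjOn (fun e : TreeEdge d k => (e.1 : ℕ))
      ↑(pathEdges d k x ∩ pathEdges d k y) := by
    intro e he e' he' hee'
    simp only [pathEdges, Finset.coe_inter, Set.mem_inter_iff, Finset.coe_image, Finset.coe_univ,
      Set.image_univ, Set.mem_range] at he he'
    obtain ⟨⟨j, rfl⟩, -⟩ := he
    obtain ⟨⟨j', rfl⟩, -⟩ := he'
    obtain rfl : j = j' := Fin.ext hee'
    rfl
  simpa using Finset.card_le_card_of_injOn _ hmaps hinj

lemma le_card_pathEdges_union {x y : Zd d} {s : ℕ} (hs : s < k) (i : Fin d)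
    (h : 2 ^ s ≤ |x i - y i|) :
    k + (s + 1) ≤ (pathEdges d k x ∪ pathEdges d k y).card := by
  have := Finset.card_union_add_card_inter (pathEdges d k x) (pathEdges d k y)
  have := card_pathEdges_inter_le (k := k) i h
  rw [card_pathEdges, card_pathEdges] at *
  omega

end TreeGeometry

section SupDist

variable {d : ℕ}

def supDist (x y : Zd d) : ℕ := Finset.univ.sup fun i => (x i - y i).natAbs

lemma natAbs_sub_le_supDist (x y : Zd d) (i : Fin d) : (x i - y i).natAbs ≤ supDist x y :=
  Finset.le_sup (f := fun i => (x i - y i).natAbs) (Finset.mem_univ i)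

lemma supDist_lt_iff {x y : Zd d} {r : ℕ} (hr : 0 < r) :
    supDist x y < r ↔ ∀ i, (x i - y i).natAbs < r := by
  simp [supDist, Finset.sup_lt_iff hr]

lemma supDist_ne_zero {x y : Zd d} (hxy : x ≠ y) : supDist x y ≠ 0 := by
  obtain ⟨i, hi⟩ := Function.ne_iff.1 hxy
  have := natAbs_sub_le_supDist x y i
  have : (x i - y i).natAbs ≠ 0 := by simpa [sub_eq_zero] using hi
  omega

lemma exists_two_pow_log_supDist_le {x y : Zd d} (hxy : x ≠ y) :
    ∃ i, 2 ^ Nat.log 2 (supDist x y) ≤ |x i - y i| := by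
  obtain ⟨i, hi⟩ := Function.ne_iff.1 hxy
  obtain ⟨i, -, hi⟩ := Finset.exists_mem_eq_sup Finset.univ ⟨i, Finset.mem_univ i⟩
    fun i => (x i - y i).natAbs
  refine ⟨i, ?_⟩
  rw [Int.abs_eq_natAbs, ← hi]
  exact_mod_cast Nat.pow_log_le_self 2 (supDist_ne_zero hxy)

lemma card_filter_supDist_lt_le (x : Zd d) (B : Finset (Zd d)) (r : ℕ) :
    (B.filter fun y => supDist x y < r).card ≤ (2 * r) ^ d := by
  rcases Nat.eq_zero_or_pos r with rfl | hr
  · simp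
  have hmaps : ∀ y ∈ B.filter fun y => supDist x y < r,
      y - x ∈ Fintype.piFinset fun _ : Fin d => Finset.Ioo (-(r : ℤ)) r := by
    intro y hy
    have := (supDist_lt_iff hr).1 (Finset.mem_filter.1 hy).2
    simp only [Fintype.mem_piFinset, Finset.mem_Ioo, Pi.sub_apply]
    intro i
    have := this i
    omega
  have hinj : Set.InjOn (fun y => y - x) ↑(B.filter fun y => supDist x y < r) :=
    fun y _ y' _ h => sub_left_injective h
  refine (Finset.card_le_card_of_injOn _ hmaps hinj).trans ?_
  rw [Fintype.card_piFinset, Finset.prod_const, Finset.card_univ, Fintype.card_fin,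
    Int.card_Ioo]
  exact Nat.pow_le_pow_left (by omega) d

/-- Decomposing by dyadic shells: at most `2 ^ d * (2 ^ d) ^ (s + 1)` points lie at
sup-distance in `[2 ^ s, 2 ^ (s + 1))` from `x`. -/
lemma sum_pow_log_supDist_le {w : ℝ} (hw : 0 ≤ w) {B : Finset (Zd d)} {x : Zd d} {k : ℕ}
    (hB : ∀ y ∈ B, supDist x y < 2 ^ k) :
    ∑ y ∈ B.erase x, w ^ (Nat.log 2 (supDist x y) + 1)
      ≤ 2 ^ d * ∑ s ∈ Finset.range k, (2 ^ d * w) ^ (s + 1) := by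
  have hmaps : ∀ y ∈ B.erase x, Nat.log 2 (supDist x y) ∈ Finset.range k := fun y hy =>
    Finset.mem_range.2 <| Nat.log_lt_of_lt_pow
      (supDist_ne_zero (Finset.ne_of_mem_erase hy).symm) (hB y (Finset.mem_of_mem_erase hy))
  rw [← Finset.sum_fiberwise_of_maps_to hmaps, Finset.mul_sum]
  refine Finset.sum_le_sum fun s _ => ?_
  set shell := (B.erase x).filter fun y => Nat.log 2 (supDist x y) = s
  have hshell : shell.card ≤ (2 * 2 ^ (s + 1)) ^ d := by
    refine (Finset.card_le_card fun y hy => ?_).trans (card_filter_supDist_lt_le x B _)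
    obtain ⟨hyB, hys⟩ := Finset.mem_filter.1 hy
    refine Finset.mem_filter.2 ⟨Finset.mem_of_mem_erase hyB, ?_⟩
    exact hys ▸ Nat.lt_pow_succ_log_self one_lt_two _
  calc ∑ y ∈ shell, w ^ (Nat.log 2 (supDist x y) + 1)
      = shell.card * w ^ (s + 1) := by
        rw [Finset.sum_congr rfl fun y hy => by rw [(Finset.mem_filter.1 hy).2],
          Finset.sum_const, nsmul_eq_mul]
    _ ≤ (2 * 2 ^ (s + 1) : ℕ) ^ d * w ^ (s + 1) := by gcongr; exact_mod_cast hshell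
    _ = 2 ^ d * (2 ^ d * w) ^ (s + 1) := by
        push_cast; rw [mul_pow, mul_pow, ← pow_mul, ← pow_mul, mul_comm (s + 1)]; ring

end SupDist

section OrthantBlock

variable {d : ℕ}

/-- Matching the signs of `a` is what keeps `a - x` inside `Δ_n`. -/
def orthantBlock (a : Zd d) (k : ℕ) : Finset (Zd d) :=
  Fintype.piFinset fun i =>
    if 0 ≤ a i then Finset.Ico 0 (2 ^ (k - 1)) else Finset.Ico (-2 ^ (k - 1)) 0

lemma bounds_of_mem_orthantBlock {a x : Zd d} {k : ℕ} (hx : x ∈ orthantBlock a k)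
    (i : Fin d) :
    (-2 ^ (k - 1) ≤ x i ∧ x i < 2 ^ (k - 1)) ∧
      (0 ≤ a i → 0 ≤ x i) ∧ (a i < 0 → x i < 0) := by
  have hpow : (0 : ℤ) < 2 ^ (k - 1) := by positivity
  have hxi := Fintype.mem_piFinset.1 hx i
  split_ifs at hxi <;> rw [Finset.mem_Ico] at hxi <;> omega

lemma card_orthantBlock (a : Zd d) (k : ℕ) :
    (orthantBlock a k).card = 2 ^ ((k - 1) * d) := by
  have hcard : ∀ i, (if 0 ≤ a i then Finset.Ico (0 : ℤ) (2 ^ (k - 1))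
      else Finset.Ico (-2 ^ (k - 1)) 0).card = 2 ^ (k - 1) := fun i => by
    have hpow : (2 : ℤ) ^ (k - 1) = ((2 ^ (k - 1) : ℕ) : ℤ) := by push_cast; rfl
    split_ifs <;> rw [Int.card_Ico] <;>
      simp only [sub_zero, zero_sub, neg_neg, hpow, Int.toNat_natCast]
  rw [orthantBlock, Fintype.card_piFinset, Finset.prod_congr rfl fun i _ => hcard i,
    Finset.prod_const, Finset.card_univ, Fintype.card_fin, ← pow_mul]

lemma orthantBlock_subset_box (a : Zd d) (k : ℕ) : ↑(orthantBlock a k) ⊆ box d k :=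
  fun _ hx i => (bounds_of_mem_orthantBlock hx i).1

lemma sub_mem_box_of_mem_orthantBlock {a x : Zd d} {k n : ℕ} (ha : a ∈ box d n) (hkn : k ≤ n)
    (hx : x ∈ orthantBlock a k) : a - x ∈ box d n := by
  intro i
  have hkn : (2 : ℤ) ^ (k - 1) ≤ 2 ^ (n - 1) := pow_le_pow_right₀ one_le_two (by omega)
  have := bounds_of_mem_orthantBlock hx i
  have := ha i
  simp only [Pi.sub_apply]
  omega

lemma supDist_lt_of_mem_orthantBlock {a x y : Zd d} {k : ℕ} (hx : x ∈ orthantBlock a k)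
    (hy : y ∈ orthantBlock a k) : supDist x y < 2 ^ (k - 1) := by
  refine (supDist_lt_iff (by positivity)).2 fun i => ?_
  have := bounds_of_mem_orthantBlock hx i
  have := bounds_of_mem_orthantBlock hy i
  push_cast [← Int.ofNat_lt, Int.natCast_natAbs]
  rw [abs_lt]
  omega

end OrthantBlock

section PathPairEvent

variable {d m n : ℕ} {Ω : Type*} {X : TreeEdge d m ⊕ TreeEdge d n → Ω → Bool}

def pathPairEvent (X : TreeEdge d m ⊕ TreeEdge d n → Ω → Bool) (a x : Zd d) : Set Ω :=
  {ω | ∀ e ∈ (pathEdges d m x).disjSum (pathEdges d n (a - x)), X e ω = true}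

lemma pathPairEvent_subset {A : Set (Zd d)} {a x : Zd d} (ha : a ∈ A) (hx : x ∈ box d m)
    (hax : a - x ∈ box d n) :
    pathPairEvent X a x ⊆ {ω | ((percCluster d m (fun e => X (Sum.inl e) ω) +
      percCluster d n fun e => X (Sum.inr e) ω) ∩ A).Nonempty} := by
  intro ω hω
  refine ⟨a, ⟨x, ?_, a - x, ?_, add_sub_cancel x a⟩, ha⟩
  · exact mem_percCluster_iff.2 ⟨hx, fun e he => hω _ (Finset.inl_mem_disjSum.2 he)⟩
  · exact mem_percCluster_iff.2 ⟨hax, fun e he => hω _ (Finset.inr_mem_disjSum.2 he)⟩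

variable [MeasurableSpace Ω] {P : Measure Ω} {p q : ℝ}

lemma measurableSet_pathPairEvent (hX : ∀ e, Measurable (X e)) (a x : Zd d) :
    MeasurableSet (pathPairEvent X a x) := by
  simp only [pathPairEvent, ofPred_forall]
  exact .biInter (Finset.countable_toSet _) fun e _ => hX e (measurableSet_singleton true)

lemma measure_forall_disjSum (hind : iIndepFun X P)
    (hXp : ∀ e, P {ω | X (Sum.inl e) ω = true} = ENNReal.ofReal p)
    (hXq : ∀ e, P {ω | X (Sum.inr e) ω = true} = ENNReal.ofReal q)
    (L : Finset (TreeEdge d m)) (R : Finset (TreeEdge d n)) :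
    P {ω | ∀ e ∈ L.disjSum R, X e ω = true}
      = ENNReal.ofReal p ^ L.card * ENNReal.ofReal q ^ R.card := by
  rw [measure_forall_eq_true hind, Finset.prod_disjSum]
  simp [hXp, hXq]

lemma measure_pathPairEvent (hind : iIndepFun X P)
    (hXp : ∀ e, P {ω | X (Sum.inl e) ω = true} = ENNReal.ofReal p)
    (hXq : ∀ e, P {ω | X (Sum.inr e) ω = true} = ENNReal.ofReal q) (a x : Zd d) :
    P (pathPairEvent X a x) = ENNReal.ofReal p ^ m * ENNReal.ofReal q ^ n := by
  rw [pathPairEvent, measure_forall_disjSum hind hXp hXq, card_pathEdges, card_pathEdges]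

/-- If `x` and `y` are at distance at least `2 ^ s`, their paths (and those of `a - x`, `a - y`)
branch apart at least `s + 1` levels above the leaves. -/
lemma measure_pathPairEvent_inter_le (hind : iIndepFun X P)
    (hXp : ∀ e, P {ω | X (Sum.inl e) ω = true} = ENNReal.ofReal p)
    (hXq : ∀ e, P {ω | X (Sum.inr e) ω = true} = ENNReal.ofReal q) (hp : p ≤ 1) (hq : q ≤ 1)
    {a x y : Zd d} {s : ℕ} (hsm : s < m) (hsn : s < n) (i : Fin d) (h : 2 ^ s ≤ |x i - y i|) :
    P (pathPairEvent X a x ∩ pathPairEvent X a y)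
      ≤ ENNReal.ofReal p ^ (m + (s + 1)) * ENNReal.ofReal q ^ (n + (s + 1)) := by
  have hsub : pathPairEvent X a x ∩ pathPairEvent X a y ⊆ {ω | ∀ e ∈
      (pathEdges d m x ∪ pathEdges d m y).disjSum
        (pathEdges d n (a - x) ∪ pathEdges d n (a - y)), X e ω = true} := by
    rintro ω ⟨hx, hy⟩ (e | e) he
    · rcases Finset.mem_union.1 (Finset.inl_mem_disjSum.1 he) with he | he
      · exact hx _ (Finset.inl_mem_disjSum.2 he)
      · exact hy _ (Finset.inl_mem_disjSum.2 he)
    · rcases Finset.mem_union.1 (Finset.inr_mem_disjSum.1 he) with he | he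
      · exact hx _ (Finset.inr_mem_disjSum.2 he)
      · exact hy _ (Finset.inr_mem_disjSum.2 he)
  have h' : 2 ^ s ≤ |(a - x) i - (a - y) i| := by
    rwa [Pi.sub_apply, Pi.sub_apply, sub_sub_sub_cancel_left, abs_sub_comm]
  refine (measure_mono hsub).trans ?_
  rw [measure_forall_disjSum hind hXp hXq]
  exact mul_le_mul'
    (pow_le_pow_right_of_le_one' (ENNReal.ofReal_le_one.2 hp) (le_card_pathEdges_union hsm i h))
    (pow_le_pow_right_of_le_one' (ENNReal.ofReal_le_one.2 hq) (le_card_pathEdges_union hsn i h'))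

end PathPairEvent

section HittingProbability

variable {d m n : ℕ} {p q : ℝ} {Ω : Type*} [MeasurableSpace Ω] {P : Measure Ω}
  {X : TreeEdge d m ⊕ TreeEdge d n → Ω → Bool}

lemma sum_measure_pathPairEvent_inter_le (hind : iIndepFun X P)
    (hXp : ∀ e, P {ω | X (Sum.inl e) ω = true} = ENNReal.ofReal p)
    (hXq : ∀ e, P {ω | X (Sum.inr e) ω = true} = ENNReal.ofReal q)
    (hp0 : 0 ≤ p) (hp1 : p ≤ 1) (hq0 : 0 ≤ q) (hq1 : q ≤ 1) (hmn : m ≤ n) {a x : Zd d}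
    (hx : x ∈ orthantBlock a m) :
    ∑ y ∈ orthantBlock a m, P (pathPairEvent X a x ∩ pathPairEvent X a y)
      ≤ ENNReal.ofReal p ^ m * ENNReal.ofReal q ^ n *
        ENNReal.ofReal (1 + 2 ^ d * ∑ s ∈ Finset.range m, (2 ^ d * p * q) ^ s) := by
  set B := orthantBlock a m
  set α := ENNReal.ofReal p ^ m * ENNReal.ofReal q ^ n
  set w : Zd d → ℝ := fun y => (p * q) ^ (Nat.log 2 (supDist x y) + 1)
  have hpair : ∀ y ∈ B.erase x, P (pathPairEvent X a x ∩ pathPairEvent X a y)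
      ≤ α * ENNReal.ofReal (w y) := by
    intro y hy
    have hxy : x ≠ y := (Finset.ne_of_mem_erase hy).symm
    obtain ⟨i, hi⟩ := exists_two_pow_log_supDist_le hxy
    have hs := Nat.log_lt_of_lt_pow (supDist_ne_zero hxy)
      (supDist_lt_of_mem_orthantBlock hx (Finset.mem_of_mem_erase hy))
    refine (measure_pathPairEvent_inter_le hind hXp hXq hp1 hq1 (by omega) (by omega) i
      hi).trans_eq ?_
    rw [ENNReal.ofReal_pow (mul_nonneg hp0 hq0), ENNReal.ofReal_mul hp0]
    ring
  have hshell := sum_pow_log_supDist_le (mul_nonneg hp0 hq0) (k := m - 1)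
    fun y hy => supDist_lt_of_mem_orthantBlock hx hy
  have hshift : ∑ s ∈ Finset.range (m - 1), (2 ^ d * (p * q)) ^ (s + 1)
      ≤ ∑ s ∈ Finset.range m, (2 ^ d * p * q) ^ s := by
    rcases Nat.eq_zero_or_pos m with rfl | hm
    · simp
    obtain ⟨k, rfl⟩ : ∃ k, m = k + 1 := ⟨m - 1, by omega⟩
    rw [Finset.sum_range_succ', Nat.add_sub_cancel]
    simp only [mul_assoc, pow_zero, le_add_iff_nonneg_right, zero_le_one]
  calc ∑ y ∈ B, P (pathPairEvent X a x ∩ pathPairEvent X a y)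
      = P (pathPairEvent X a x)
          + ∑ y ∈ B.erase x, P (pathPairEvent X a x ∩ pathPairEvent X a y) := by
        rw [← Finset.add_sum_erase _ _ hx, inter_self]
    _ ≤ α + ∑ y ∈ B.erase x, α * ENNReal.ofReal (w y) :=
        add_le_add (measure_pathPairEvent hind hXp hXq a x).le (Finset.sum_le_sum hpair)
    _ = α * ENNReal.ofReal (1 + ∑ y ∈ B.erase x, w y) := by
        rw [← Finset.mul_sum, ← ENNReal.ofReal_sum_of_nonneg fun y _ => by positivity,
          ENNReal.ofReal_add zero_le_one (Finset.sum_nonneg fun y _ => by positivity),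
          ENNReal.ofReal_one, mul_add, mul_one]
    _ ≤ α * ENNReal.ofReal (1 + 2 ^ d * ∑ s ∈ Finset.range m, (2 ^ d * p * q) ^ s) := by
        gcongr
        exact hshell.trans (by gcongr)

theorem le_measure_percCluster_add_inter_nonempty (hX : ∀ e, Measurable (X e))
    (hind : iIndepFun X P)
    (hXp : ∀ e, P {ω | X (Sum.inl e) ω = true} = ENNReal.ofReal p)
    (hXq : ∀ e, P {ω | X (Sum.inr e) ω = true} = ENNReal.ofReal q)
    (hp0 : 0 < p) (hp1 : p ≤ 1) (hq0 : 0 < q) (hq1 : q ≤ 1) (hm : 1 ≤ m) (hmn : m ≤ n)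
    {A : Set (Zd d)} (hA : A.Nonempty) (hAbox : A ⊆ box d n) :
    ENNReal.ofReal ((2 ^ d * p * q) ^ m * q ^ (n - m)
        / (2 ^ d * (1 + 2 ^ d * ∑ s ∈ Finset.range m, (2 ^ d * p * q) ^ s)))
      ≤ P {ω | ((percCluster d m (fun e => X (Sum.inl e) ω) +
          percCluster d n fun e => X (Sum.inr e) ω) ∩ A).Nonempty} := by
  obtain ⟨a, ha⟩ := hA
  set B := orthantBlock a m
  set C := 1 + 2 ^ d * ∑ s ∈ Finset.range m, (2 ^ d * p * q) ^ s
  have hC : 0 < C := by positivity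
  have hB : B.Nonempty := Finset.card_pos.1 (by rw [card_orthantBlock]; positivity)
  have hα0 : ENNReal.ofReal p ^ m * ENNReal.ofReal q ^ n ≠ 0 := by simp [hp0, hq0]
  have hαtop : ENNReal.ofReal p ^ m * ENNReal.ofReal q ^ n ≠ ⊤ := by finiteness
  have hsecond := card_mul_le_measure_biUnion_mul hB (measurableSet_pathPairEvent hX a) hα0 hαtop
    (fun x _ => measure_pathPairEvent hind hXp hXq a x)
    (fun x hx => sum_measure_pathPairEvent_inter_le hind hXp hXq hp0.le hp1 hq0.le hq1 hmn hx)
  have hunion : ⋃ x ∈ B, pathPairEvent X a x ⊆ _ := iUnion₂_subset fun x hx =>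
    pathPairEvent_subset ha (orthantBlock_subset_box a m hx)
      (sub_mem_box_of_mem_orthantBlock (hAbox ha) hmn hx)
  have hcard : (B.card : ℝ≥0∞) * (ENNReal.ofReal p ^ m * ENNReal.ofReal q ^ n)
      = ENNReal.ofReal ((2 ^ d * p * q) ^ m * q ^ (n - m) / 2 ^ d) := by
    have hreal : (2 : ℝ) ^ ((m - 1) * d) * (p ^ m * q ^ n)
        = (2 ^ d * p * q) ^ m * q ^ (n - m) / 2 ^ d := by
      obtain ⟨k, rfl⟩ : ∃ k, m = k + 1 := ⟨m - 1, by omega⟩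
      obtain ⟨r, rfl⟩ := Nat.exists_eq_add_of_le hmn
      rw [Nat.add_sub_cancel, Nat.add_sub_cancel_left, eq_div_iff (by positivity)]
      ring
    rw [card_orthantBlock, ← hreal, ENNReal.ofReal_mul (by positivity),
      ENNReal.ofReal_mul (by positivity), ENNReal.ofReal_pow hp0.le, ENNReal.ofReal_pow hq0.le]
    norm_cast
  rw [← div_div, ENNReal.ofReal_div_of_pos hC, ← hcard]
  exact ENNReal.div_le_of_le_mul (hsecond.trans (mul_le_mul_left (measure_mono hunion) _))

end HittingProbability

lemma supercritical_const_le {d : ℕ} {l : ℝ} (hl : 1 < l) (m : ℕ) :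
    (2 ^ d * (1 + 2 ^ d / (l - 1)))⁻¹
      ≤ l ^ m / (2 ^ d * (1 + 2 ^ d * ∑ s ∈ Finset.range m, l ^ s)) := by
  have hK : ∑ s ∈ Finset.range m, l ^ s ≤ l ^ m / (l - 1) := by
    rw [geom_sum_eq hl.ne']
    gcongr
    linarith
  have hlm : 1 ≤ l ^ m := one_le_pow₀ hl.le
  rw [inv_eq_one_div, div_le_div_iff₀ (by positivity) (by positivity), one_mul]
  calc 2 ^ d * (1 + 2 ^ d * ∑ s ∈ Finset.range m, l ^ s)
      ≤ 2 ^ d * (l ^ m + 2 ^ d * (l ^ m / (l - 1))) := by gcongr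
    _ = l ^ m * (2 ^ d * (1 + 2 ^ d / (l - 1))) := by ring

lemma critical_const_le {d m : ℕ} (hm : 1 ≤ m) :
    (2 ^ d * (1 + 2 ^ d))⁻¹ * (m : ℝ)⁻¹ ≤ 1 / (2 ^ d * (1 + 2 ^ d * m)) := by
  have : (1 : ℝ) ≤ m := by exact_mod_cast hm
  have h2 : (0 : ℝ) < 2 ^ d := by positivity
  rw [← mul_inv, one_div]
  exact inv_anti₀ (by positivity) (by nlinarith)

end FractalPercolation

open FractalPercolation

theorem statement13_general (d : ℕ) (p q : ℝ)
    (hp : p ∈ Set.Ioo (((2:ℝ) ^ d)⁻¹) 1) (hq : q ∈ Set.Ioo (((2:ℝ) ^ d)⁻¹) 1) :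
    ∃ c : ℝ, 0 < c ∧
      ∀ (m n : ℕ), 1 ≤ m → m ≤ n →
      ∀ (Ω : Type) (mΩ : MeasurableSpace Ω) (P : Measure Ω),
        IsProbabilityMeasure P →
      ∀ X : TreeEdge d m ⊕ TreeEdge d n → Ω → Bool,
        (∀ e, Measurable (X e)) →
        iIndepFun X P →
        (∀ e, P {ω | X (Sum.inl e) ω = true} = ENNReal.ofReal p) →
        (∀ e, P {ω | X (Sum.inr e) ω = true} = ENNReal.ofReal q) →
      ∀ A : Set (Zd d), A.Nonempty → A ⊆ box d n →
        ((1 < 2 ^ d * p * q →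
          ENNReal.ofReal (c * q ^ (n - m)) ≤
            P {ω | ((percCluster d m (fun e => X (Sum.inl e) ω) +
                     percCluster d n fun e => X (Sum.inr e) ω) ∩ A).Nonempty}) ∧
         (2 ^ d * p * q = 1 →
          ENNReal.ofReal (c * (m : ℝ)⁻¹ * q ^ (n - m)) ≤
            P {ω | ((percCluster d m (fun e => X (Sum.inl e) ω) +
                     percCluster d n fun e => X (Sum.inr e) ω) ∩ A).Nonempty})) := by
  have hp0 : 0 < p := (inv_pos.2 (by positivity)).trans hp.1
  have hq0 : 0 < q := (inv_pos.2 (by positivity)).trans hq.1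
  set l := 2 ^ d * p * q
  refine ⟨if 1 < l then (2 ^ d * (1 + 2 ^ d / (l - 1)))⁻¹ else (2 ^ d * (1 + 2 ^ d))⁻¹,
    by split_ifs with hl
       · have := sub_pos.2 hl; positivity
       · positivity, ?_⟩
  intro m n hm hmn Ω _ P _ X hX hind hXp hXq A hA hAbox
  have hbound := le_measure_percCluster_add_inter_nonempty hX hind hXp hXq hp0 hp.2.le hq0
    hq.2.le hm hmn hA hAbox
  refine ⟨fun hl => le_trans (ENNReal.ofReal_le_ofReal ?_) hbound,
    fun hl => le_trans (ENNReal.ofReal_le_ofReal ?_) hbound⟩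
  · rw [if_pos hl, mul_div_right_comm]
    exact mul_le_mul_of_nonneg_right (supercritical_const_le hl m) (by positivity)
  · rw [if_neg hl.not_gt, mul_div_right_comm, show 2 ^ d * p * q = 1 from hl]
    simp only [one_pow, Finset.sum_const, Finset.card_range, nsmul_eq_mul, mul_one]
    exact mul_le_mul_of_nonneg_right (critical_const_le hm) (by positivity)

/-- Lower bounds for the hitting probability of the Minkowski sum of
two independent fractal percolations in the supercritical (`2^d p q > 1`) and critical
(`2^d p q = 1`) regimes. -/
theorem statement13 (d : ℕ) (hd : 1 ≤ d) (p q : ℝ)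
    (hp : p ∈ Set.Ioo (((2:ℝ) ^ d)⁻¹) 1) (hq : q ∈ Set.Ioo (((2:ℝ) ^ d)⁻¹) 1)
    (hpq : 1 ≤ 2 ^ d * p * q) :
    ∃ c : ℝ, 0 < c ∧
      ∀ (m n : ℕ), 1 ≤ m → m ≤ n →
      ∀ (Ω : Type) (mΩ : MeasurableSpace Ω) (P : Measure Ω),
        IsProbabilityMeasure P →
      ∀ X : TreeEdge d m ⊕ TreeEdge d n → Ω → Bool,
        (∀ e, Measurable (X e)) →
        iIndepFun X P →
        (∀ e, P {ω | X (Sum.inl e) ω = true} = ENNReal.ofReal p) →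
        (∀ e, P {ω | X (Sum.inr e) ω = true} = ENNReal.ofReal q) →
      ∀ A : Set (Zd d), A.Nonempty → A ⊆ box d n →
        ((1 < 2 ^ d * p * q →
          ENNReal.ofReal (c * q ^ (n - m)) ≤
            P {ω | ((percCluster d m (fun e => X (Sum.inl e) ω) +
                     percCluster d n fun e => X (Sum.inr e) ω) ∩ A).Nonempty}) ∧
         (2 ^ d * p * q = 1 →
          ENNReal.ofReal (c * (m : ℝ)⁻¹ * q ^ (n - m)) ≤
            P {ω | ((percCluster d m (fun e => X (Sum.inl e) ω) +
                     percCluster d n fun e => X (Sum.inr e) ω) ∩ A).Nonempty})) :=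
  statement13_general d p q hp hq
end
end

section
/- Let d ≥ 1. For each k ≥ 1 let Z_k and Ẑ_k be (deterministic) families of dyadic subcubes of [−1/2,1/2)^d of side length 2^{−k} such that every cube of Z_{k+1} is contained in a cube of Z_k (and likewise for Ẑ_{k+1}, Ẑ_k). Set D_k := (⋃_{Q∈Z_k} 2^k Q) ∩ ℤ^d, D := ⋂_{k≥1} ⋃_{Q∈Z_k} closure(Q), and similarly D̂_k, D̂. For a closed set Λ ⊆ [−1/2,1/2]^d and k ≥ 0, let T_k(Λ) := ⋃ {x + [−2^{1−k}, 2^{1−k}]^d : x ∈ 2^{−k}ℤ^d, (x + [−2^{1−k}, 2^{1−k}]^d) ∩ Λ ≠ ∅}. Then (D + D̂) ∩ Λ ≠ ∅ if and only if for every k ≥ 1, (D_k + D̂_k) ∩ 2^k T_k(Λ) ≠ ∅. -/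
/-!
If `a ∈ D`, `b ∈ D̂` and `a + b ∈ Λ`, the corners of the depth-`k` cubes containing `a` and `b`
add up to a point of `2^(-k)ℤ^d` whose grid cube contains `a + b`; rescaled, this is a point of
`D_k + D̂_k` in `2^k T_k(Λ)`. Conversely, such a point at depth `k` gives corners `a_k`, `b_k` of
depth-`k` cubes of the two families with `a_k + b_k` within `4·2^(-k)` of `Λ`. The unions of the
depth-`k` cubes are compact and decreasing in `k`, so Cantor's intersection theorem yields a pair
`(a, b)` in all of them, and `a + b` lies in the closed set `Λ`.
-/

open MeasureTheory ProbabilityTheory Set Pointwise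
open scoped ENNReal Classical

noncomputable section

/-- Points of `ℝ^d`. -/
abbrev Rv (d : ℕ) := Fin d → ℝ

/-- The closed dyadic cube of side `2^(-k)` inside `[-1/2, 1/2]^d` whose coordinatewise
binary code is `v` (with `0 ≤ v i < 2^k`). -/
def dyadicCubeR (d k : ℕ) (v : Zd d) : Set (Rv d) :=
  {x | ∀ i, -(1/2 : ℝ) + (v i : ℝ) / 2 ^ k ≤ x i ∧ x i ≤ -(1/2 : ℝ) + ((v i : ℝ) + 1) / 2 ^ k}

/-- The cube `y/2^k + [-2^(1-k), 2^(1-k)]^d` around the grid point `y/2^k ∈ 2^(-k)ℤ^d`. -/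
def gridCube (d k : ℕ) (y : Zd d) : Set (Rv d) :=
  {x | ∀ i, (y i : ℝ) / 2 ^ k - (2:ℝ) ^ ((1:ℤ) - k) ≤ x i ∧
        x i ≤ (y i : ℝ) / 2 ^ k + (2:ℝ) ^ ((1:ℤ) - k)}

/-- The cube neighbourhood `T_k(Λ)`: the union of the cubes `x + [-2^(1-k), 2^(1-k)]^d`,
`x ∈ 2^(-k)ℤ^d`, meeting `Λ`. -/
def Tk (d k : ℕ) (Λ : Set (Rv d)) : Set (Rv d) :=
  ⋃ y ∈ {y : Zd d | (gridCube d k y ∩ Λ).Nonempty}, gridCube d k y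

/-- The lattice set `D_k = (⋃_{Q ∈ Z_k} 2^k Q) ∩ ℤ^d` associated to a family of depth-`k`
dyadic cubes given by their codes: the cube of code `v` rescaled by `2^k` contains the
single lattice point `v - 2^(k-1)·(1,…,1)`. -/
def latticeSet (d k : ℕ) (Z : Set (Zd d)) : Set (Zd d) :=
  {x | ∃ v ∈ Z, x = fun i => v i - 2 ^ (k - 1)}

section CantorIntersection

open Filter Topology Metric

theorem exists_mem_iInter_map_mem_of_dist_le {X Y : Type*} [TopologicalSpace X] [T2Space X]
    [PseudoMetricSpace Y] {A : ℕ → Set X} (hA : Antitone A) (hAc : ∀ n, IsCompact (A n))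
    {f : X → Y} (hf : Continuous f) {Λ : Set Y} (hΛ : IsClosed Λ) {ε : ℕ → ℝ}
    (hε : Antitone ε) (hε0 : Tendsto ε atTop (𝓝 0))
    (hnear : ∀ n, ∃ x ∈ A n, ∃ l ∈ Λ, dist (f x) l ≤ ε n) :
    ∃ x ∈ ⋂ n, A n, f x ∈ Λ := by
  set S : ℕ → Set X := fun n => A n ∩ f ⁻¹' cthickening (ε n) Λ
  have hS_anti : ∀ n, S (n + 1) ⊆ S n := fun n =>
    inter_subset_inter (hA n.le_succ) (preimage_mono (cthickening_mono (hε n.le_succ) Λ))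
  have hS_ne : ∀ n, (S n).Nonempty := fun n => by
    obtain ⟨x, hx, l, hl, hxl⟩ := hnear n
    exact ⟨x, hx, mem_cthickening_of_dist_le _ l _ Λ hl hxl⟩
  have hS_closed : ∀ n, IsClosed (S n) := fun n =>
    (hAc n).isClosed.inter (isClosed_cthickening.preimage hf)
  obtain ⟨x, hx⟩ := ((hAc 0).inter_right (isClosed_cthickening.preimage hf))
    |>.nonempty_iInter_of_sequence_nonempty_isCompact_isClosed S hS_anti hS_ne hS_closed
  rw [mem_iInter] at hx
  refine ⟨x, mem_iInter.2 fun n => (hx n).1, ?_⟩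
  rw [← hΛ.closure_eq, closure_eq_iInter_cthickening, mem_iInter₂]
  intro δ hδ
  obtain ⟨n, hn⟩ := (hε0.eventually (gt_mem_nhds hδ)).exists
  exact cthickening_mono hn.le Λ (hx n).2

end CantorIntersection

def dyadicCorner (d k : ℕ) (v : Zd d) : Rv d := fun i => -(1/2 : ℝ) + (v i : ℝ) / 2 ^ k

lemma mem_dyadicCubeR_iff {d k : ℕ} {v : Zd d} {x : Rv d} :
    x ∈ dyadicCubeR d k v ↔
      ∀ i, dyadicCorner d k v i ≤ x i ∧ x i ≤ dyadicCorner d k v i + 1 / 2 ^ k := by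
  simp only [dyadicCubeR, dyadicCorner, mem_ofPred_eq, add_div, add_assoc]

lemma dyadicCorner_mem_dyadicCubeR (d k : ℕ) (v : Zd d) :
    dyadicCorner d k v ∈ dyadicCubeR d k v :=
  mem_dyadicCubeR_iff.2 fun _ => ⟨le_rfl, le_add_of_nonneg_right (by positivity)⟩

lemma isCompact_dyadicCubeR (d k : ℕ) (v : Zd d) : IsCompact (dyadicCubeR d k v) := by
  have h : dyadicCubeR d k v = Set.pi univ fun i =>
      Icc (-(1/2 : ℝ) + (v i : ℝ) / 2 ^ k) (-(1/2 : ℝ) + ((v i : ℝ) + 1) / 2 ^ k) := by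
    ext x
    simp only [dyadicCubeR, mem_ofPred_eq, mem_pi, mem_univ, mem_Icc, true_implies]
  rw [h]
  exact isCompact_univ_pi fun _ => isCompact_Icc

lemma dyadicCubeR_succ_subset (d k : ℕ) (v : Zd d) :
    dyadicCubeR d (k + 1) v ⊆ dyadicCubeR d k fun i => v i / 2 := by
  intro x hx i
  obtain ⟨h1, h2⟩ := hx i
  have hlo : (2 : ℝ) * ((v i / 2 : ℤ) : ℝ) ≤ v i := by
    exact_mod_cast Int.mul_ediv_self_le two_ne_zero
  have hhi : (v i : ℝ) + 1 ≤ 2 * ((v i / 2 : ℤ) : ℝ) + 2 := by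
    have : v i + 1 ≤ 2 * (v i / 2) + 2 := by omega
    exact_mod_cast this
  have hpos : (0 : ℝ) < 2 ^ k := by positivity
  rw [pow_succ] at h1 h2
  constructor
  · have : ((v i / 2 : ℤ) : ℝ) / 2 ^ k ≤ (v i : ℝ) / (2 ^ k * 2) := by
      rw [div_le_div_iff₀ hpos (by positivity)]; nlinarith
    linarith
  · have : ((v i : ℝ) + 1) / (2 ^ k * 2) ≤ (((v i / 2 : ℤ) : ℝ) + 1) / 2 ^ k := by
      rw [div_le_div_iff₀ (by positivity) hpos]; nlinarith
    linarith

lemma mem_gridCube_iff {d k : ℕ} {y : Zd d} {x : Rv d} :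
    x ∈ gridCube d k y ↔ ∀ i, |x i - (y i : ℝ) / 2 ^ k| ≤ 2 / 2 ^ k := by
  have h : (2 : ℝ) ^ ((1 : ℤ) - k) = 2 / 2 ^ k := by
    rw [zpow_sub₀ two_ne_zero, zpow_one, zpow_natCast]
  simp only [gridCube, mem_ofPred_eq, h, abs_le]
  refine forall_congr' fun i => ?_
  constructor <;> rintro ⟨h1, h2⟩ <;> constructor <;> linarith

lemma exists_dist_le_of_mem_Tk {d k : ℕ} {Λ : Set (Rv d)} {x : Rv d} (hx : x ∈ Tk d k Λ) :
    ∃ l ∈ Λ, dist x l ≤ 4 / 2 ^ k := by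
  obtain ⟨y, ⟨l, hly, hlΛ⟩, hxy⟩ := mem_iUnion₂.1 hx
  refine ⟨l, hlΛ, (dist_pi_le_iff (by positivity)).2 fun i => ?_⟩
  obtain ⟨hx1, hx2⟩ := abs_le.1 (mem_gridCube_iff.1 hxy i)
  obtain ⟨hl1, hl2⟩ := abs_le.1 (mem_gridCube_iff.1 hly i)
  rw [Real.dist_eq, abs_le]
  constructor <;> linarith [show 4 / (2 : ℝ) ^ k = 2 / 2 ^ k + 2 / 2 ^ k by ring]

/-- The sum of the corners lies on the grid `2^(-k)ℤ^d`, and `a + b` exceeds it by at most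
`2^(1-k)` in each coordinate, so the grid cube around the corner sum contains `a + b ∈ Λ`. -/
lemma dyadicCorner_add_mem_Tk {d k : ℕ} {Λ : Set (Rv d)} {v w : Zd d} {a b : Rv d}
    (ha : a ∈ dyadicCubeR d k v) (hb : b ∈ dyadicCubeR d k w) (hab : a + b ∈ Λ) :
    dyadicCorner d k v + dyadicCorner d k w ∈ Tk d k Λ := by
  have hcorner : ∀ i, dyadicCorner d k v i + dyadicCorner d k w i
      = ((v i + w i - 2 ^ k : ℤ) : ℝ) / 2 ^ k := fun i => by
    simp only [dyadicCorner]; push_cast; field_simp; ring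
  refine mem_iUnion₂.2 ⟨fun i => v i + w i - 2 ^ k, ⟨a + b, ?_, hab⟩, ?_⟩ <;>
    refine mem_gridCube_iff.2 fun i => ?_ <;> simp only [Pi.add_apply, ← hcorner]
  · obtain ⟨ha1, ha2⟩ := mem_dyadicCubeR_iff.1 ha i
    obtain ⟨hb1, hb2⟩ := mem_dyadicCubeR_iff.1 hb i
    rw [abs_le]
    constructor <;> linarith [show 2 / (2 : ℝ) ^ k = 1 / 2 ^ k + 1 / 2 ^ k by ring]
  · simp only [sub_self, abs_zero]; positivity

lemma inv_smul_latticePoint_add {d k : ℕ} (hk : 1 ≤ k) (v w : Zd d) :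
    ((2 : ℝ) ^ k)⁻¹ • (fun i => ((((fun i => v i - 2 ^ (k - 1)) +
      fun i => w i - 2 ^ (k - 1) : Zd d) i : ℤ) : ℝ)) =
      dyadicCorner d k v + dyadicCorner d k w := by
  obtain ⟨k, rfl⟩ := Nat.exists_eq_add_of_le' hk
  ext i
  simp only [dyadicCorner, Pi.smul_apply, Pi.add_apply, smul_eq_mul, Nat.add_sub_cancel]
  push_cast
  field_simp
  ring

lemma exists_latticeSet_add_mem_smul_Tk_iff {d k : ℕ} (hk : 1 ≤ k) (Z W : Set (Zd d))
    (Λ : Set (Rv d)) :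
    (∃ z ∈ latticeSet d k Z + latticeSet d k W,
        (fun i => (z i : ℝ)) ∈ (2 : ℝ) ^ k • Tk d k Λ) ↔
      ∃ v ∈ Z, ∃ w ∈ W, dyadicCorner d k v + dyadicCorner d k w ∈ Tk d k Λ := by
  simp only [mem_smul_set_iff_inv_smul_mem₀ (pow_ne_zero k two_ne_zero : (2 : ℝ) ^ k ≠ 0)]
  constructor
  · rintro ⟨_, ⟨_, ⟨v, hv, rfl⟩, _, ⟨w, hw, rfl⟩, rfl⟩, hT⟩
    exact ⟨v, hv, w, hw, inv_smul_latticePoint_add hk v w ▸ hT⟩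
  · rintro ⟨v, hv, w, hw, hT⟩
    exact ⟨_, add_mem_add ⟨v, hv, rfl⟩ ⟨w, hw, rfl⟩,
      (inv_smul_latticePoint_add hk v w).symm ▸ hT⟩

def cubeUnion (d k : ℕ) (Z : Set (Zd d)) : Set (Rv d) := ⋃ v ∈ Z, dyadicCubeR d k v

lemma isCompact_cubeUnion {d k : ℕ} {Z : Set (Zd d)}
    (hZ : ∀ v ∈ Z, ∀ i, 0 ≤ v i ∧ v i < 2 ^ k) : IsCompact (cubeUnion d k Z) := by
  have hfin : Z.Finite := (Finite.pi fun _ : Fin d => finite_Ico (0 : ℤ) (2 ^ k)).subset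
    fun v hv i _ => hZ v hv i
  exact hfin.isCompact_biUnion fun v _ => isCompact_dyadicCubeR d k v

lemma cubeUnion_succ_subset {d k : ℕ} {Z Z' : Set (Zd d)}
    (h : ∀ v ∈ Z', (fun i => v i / 2) ∈ Z) : cubeUnion d (k + 1) Z' ⊆ cubeUnion d k Z := by
  intro x hx
  obtain ⟨v, hv, hxv⟩ := mem_iUnion₂.1 hx
  exact mem_iUnion₂.2 ⟨_, h v hv, dyadicCubeR_succ_subset d k v hxv⟩

lemma exists_mem_cubeUnion_prod_dist_le {d k : ℕ} (hk : 1 ≤ k) {Z W : Set (Zd d)}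
    {Λ : Set (Rv d)} (h : ∃ z ∈ latticeSet d k Z + latticeSet d k W,
      (fun i => (z i : ℝ)) ∈ (2 : ℝ) ^ k • Tk d k Λ) :
    ∃ p ∈ cubeUnion d k Z ×ˢ cubeUnion d k W, ∃ l ∈ Λ,
      dist (p.1 + p.2) l ≤ 4 / 2 ^ k := by
  obtain ⟨v, hv, w, hw, hT⟩ := (exists_latticeSet_add_mem_smul_Tk_iff hk Z W Λ).1 h
  exact ⟨(dyadicCorner d k v, dyadicCorner d k w),
    ⟨mem_biUnion hv (dyadicCorner_mem_dyadicCubeR d k v),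
      mem_biUnion hw (dyadicCorner_mem_dyadicCubeR d k w)⟩,
    exists_dist_le_of_mem_Tk hT⟩

lemma antitone_div_two_pow_succ {c : ℝ} (hc : 0 ≤ c) :
    Antitone fun n : ℕ => c / 2 ^ (n + 1) := fun _ _ hmn =>
  div_le_div_of_nonneg_left hc (by positivity) (pow_le_pow_right₀ one_le_two (by omega))

lemma tendsto_div_two_pow_succ_atTop (c : ℝ) :
    Filter.Tendsto (fun n : ℕ => c / 2 ^ (n + 1)) Filter.atTop (nhds 0) :=
  tendsto_const_nhds.div_atTop
    ((tendsto_pow_atTop_atTop_of_one_lt one_lt_two).comp (Filter.tendsto_add_atTop_nat 1))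

theorem statement17_general (d : ℕ) (Z W : ℕ → Set (Zd d))
    (hZvalid : ∀ k, 1 ≤ k → ∀ v ∈ Z k, ∀ i, 0 ≤ v i ∧ v i < 2 ^ k)
    (hWvalid : ∀ k, 1 ≤ k → ∀ v ∈ W k, ∀ i, 0 ≤ v i ∧ v i < 2 ^ k)
    (hZnest : ∀ k, 1 ≤ k → ∀ v ∈ Z (k + 1), (fun i => v i / 2) ∈ Z k)
    (hWnest : ∀ k, 1 ≤ k → ∀ v ∈ W (k + 1), (fun i => v i / 2) ∈ W k)
    (Λ : Set (Rv d)) (hΛc : IsClosed Λ) :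
    (((⋂ k ∈ {k : ℕ | 1 ≤ k}, ⋃ v ∈ Z k, dyadicCubeR d k v) +
      (⋂ k ∈ {k : ℕ | 1 ≤ k}, ⋃ v ∈ W k, dyadicCubeR d k v)) ∩ Λ).Nonempty ↔
    ∀ k, 1 ≤ k →
      ∃ z ∈ latticeSet d k (Z k) + latticeSet d k (W k),
        (fun i => (z i : ℝ)) ∈ (2:ℝ) ^ k • Tk d k Λ := by
  constructor
  · rintro ⟨_, ⟨a, ha, b, hb, rfl⟩, habΛ⟩ k hk
    obtain ⟨v, hv, hav⟩ := mem_iUnion₂.1 (mem_iInter₂.1 ha k hk)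
    obtain ⟨w, hw, hbw⟩ := mem_iUnion₂.1 (mem_iInter₂.1 hb k hk)
    exact (exists_latticeSet_add_mem_smul_Tk_iff hk _ _ Λ).2
      ⟨v, hv, w, hw, dyadicCorner_add_mem_Tk hav hbw habΛ⟩
  · intro H
    have hsucc : ∀ n, 1 ≤ n + 1 := Nat.le_add_left 1
    set A : ℕ → Set (Rv d × Rv d) := fun n =>
      cubeUnion d (n + 1) (Z (n + 1)) ×ˢ cubeUnion d (n + 1) (W (n + 1))
    have hA : Antitone A := antitone_nat_of_succ_le fun n =>
      prod_mono (cubeUnion_succ_subset (hZnest _ (hsucc n)))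
        (cubeUnion_succ_subset (hWnest _ (hsucc n)))
    have hAc : ∀ n, IsCompact (A n) := fun n =>
      (isCompact_cubeUnion (hZvalid _ (hsucc n))).prod (isCompact_cubeUnion (hWvalid _ (hsucc n)))
    obtain ⟨p, hp, hpΛ⟩ := exists_mem_iInter_map_mem_of_dist_le hA hAc continuous_add hΛc
      (antitone_div_two_pow_succ zero_le_four) (tendsto_div_two_pow_succ_atTop 4)
      fun n => exists_mem_cubeUnion_prod_dist_le (hsucc n) (H _ (hsucc n))
    have hpA : ∀ k, 1 ≤ k → p ∈ cubeUnion d k (Z k) ×ˢ cubeUnion d k (W k) :=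
      fun k hk => by
        obtain ⟨n, rfl⟩ := Nat.exists_eq_add_of_le' hk
        exact mem_iInter.1 hp n
    exact ⟨p.1 + p.2, add_mem_add (mem_iInter₂.2 fun k hk => (hpA k hk).1)
      (mem_iInter₂.2 fun k hk => (hpA k hk).2), hpΛ⟩

/-- For nested deterministic families of dyadic cubes `Z_k, Ẑ_k` with
limit sets `D, D̂` and discrete versions `D_k, D̂_k`, a closed set `Λ ⊆ [-1/2,1/2]^d` meets
`D + D̂` iff for every `k ≥ 1` the rescaled neighbourhood `2^k T_k(Λ)` meets `D_k + D̂_k`. -/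
theorem statement17 (d : ℕ) (hd : 1 ≤ d) (Z W : ℕ → Set (Zd d))
    (hZvalid : ∀ k, 1 ≤ k → ∀ v ∈ Z k, ∀ i, 0 ≤ v i ∧ v i < 2 ^ k)
    (hWvalid : ∀ k, 1 ≤ k → ∀ v ∈ W k, ∀ i, 0 ≤ v i ∧ v i < 2 ^ k)
    (hZnest : ∀ k, 1 ≤ k → ∀ v ∈ Z (k + 1), (fun i => v i / 2) ∈ Z k)
    (hWnest : ∀ k, 1 ≤ k → ∀ v ∈ W (k + 1), (fun i => v i / 2) ∈ W k)
    (Λ : Set (Rv d)) (hΛc : IsClosed Λ) (hΛs : Λ ⊆ {x | ∀ i, |x i| ≤ 1/2}) :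
    (((⋂ k ∈ {k : ℕ | 1 ≤ k}, ⋃ v ∈ Z k, dyadicCubeR d k v) +
      (⋂ k ∈ {k : ℕ | 1 ≤ k}, ⋃ v ∈ W k, dyadicCubeR d k v)) ∩ Λ).Nonempty ↔
    ∀ k, 1 ≤ k →
      ∃ z ∈ latticeSet d k (Z k) + latticeSet d k (W k),
        (fun i => (z i : ℝ)) ∈ (2:ℝ) ^ k • Tk d k Λ :=
  statement17_general d Z W hZvalid hWvalid hZnest hWnest Λ hΛc
end
end

section
/- Let d ≥ 1, k ≥ 1, p ∈ [0,1], and perform Bernoulli bond percolation with parameter p on the complete 2^d-ary tree Γ^{(k)} of height k (each edge independently open with probability p). List the 2^{dk} leaves u_1, …, u_{2^{dk}} in lexicographic order of their digit strings in ({0,1}^d)^k, and for each i define Y_i := (y_{i1}, …, y_{ik}) ∈ {0,1}^k, where y_{ij} = 1 if the j-th edge on the path from the root to u_i is open and y_{ij} = 0 otherwise. Then the sequence (Y_i)_{1 ≤ i ≤ 2^{dk}} is a Markov chain: for every 2 ≤ i ≤ 2^{dk} − 1, Y_{i+1} is conditionally independent of (Y_1, …, Y_{i−1}) given Y_i. 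-/
open MeasureTheory ProbabilityTheory Set Pointwise
open scoped ENNReal Classical

noncomputable section

/-- The vector of states of the `k` edges on the root-to-leaf path of the `t`-th leaf
(`0`-indexed, lexicographic order) in the edge configuration `ω`. -/
def leafPath (d k : ℕ) (t : ℕ) (ω : TreeEdge d k → Bool) : Fin k → Bool :=
  fun j => ω (j, ancestorCode d k ((j : ℕ) + 1) (leafOfIdx d k t))

/-!
Number the leaves `0, 1, …` lexicographically and let `L` be the depth of the most recent common
ancestor of the leaves `i - 1` and `i`. Leaves sharing their depth-`m` ancestor are exactly those
with the same quotient `t / 2^(d(k-m))`; since `t ≤ i - 1 ≤ i`, an ancestor shared by the leaves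
`t` and `i` is therefore shared by `i - 1`. So the path of leaf `i` agrees with that of leaf
`i - 1` above depth `L` and uses below depth `L` only edges lying on no path of a leaf
`t ≤ i - 1`. Given the path of leaf `i - 1`, the path of leaf `i` is thus a function of edges
disjoint from (hence independent of) those that determine the paths of the leaves `0, …, i - 1`.
-/

theorem Nat.div_two_pow_eq_div_two_pow_iff {x y a : ℕ} :
    x / 2 ^ a = y / 2 ^ a ↔ ∀ n, a ≤ n → x.testBit n = y.testBit n := by
  refine ⟨fun h n hn => ?_, fun h => Nat.eq_of_testBit_eq fun r => ?_⟩
  · simpa [Nat.testBit_div_two_pow, Nat.sub_add_cancel hn] using congrArg (·.testBit (n - a)) h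
  · simpa [Nat.testBit_div_two_pow] using h (r + a) (Nat.le_add_left a r)

theorem Nat.testBit_sum_toNat_mul_two_pow (b : ℕ → Bool) (n r : ℕ) :
    (∑ q ∈ Finset.range n, (b q).toNat * 2 ^ q).testBit r = (decide (r < n) && b r) := by
  induction n generalizing b r with
  | zero => simp
  | succ n ih =>
    have hsplit : ∑ q ∈ Finset.range (n + 1), (b q).toNat * 2 ^ q
        = Nat.bit (b 0) (∑ q ∈ Finset.range n, (b (q + 1)).toNat * 2 ^ q) := by
      rw [Finset.sum_range_succ', Nat.bit_val, Finset.mul_sum, pow_zero, mul_one]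
      exact congrArg (· + _) (Finset.sum_congr rfl fun q _ => by ring)
    rw [hsplit]
    cases r with
    | zero => simp
    | succ r => simp [Nat.testBit_bit_succ, ih]

/-- The `i`-th coordinate of `leafOfIdx d k t`, shifted by `2^(k-1)` into `ℕ`. -/
def leafCoord (d k t i : ℕ) : ℕ :=
  ∑ q ∈ Finset.range k, (t.testBit (d * q + (d - 1 - i))).toNat * 2 ^ q

theorem ancestorCode_leafOfIdx (d k m t : ℕ) (i : Fin d) :
    ancestorCode d k m (leafOfIdx d k t) i = ((leafCoord d k t i / 2 ^ (k - m) : ℕ) : ℤ) := by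
  have hcoord : leafOfIdx d k t i + 2 ^ (k - 1) = (leafCoord d k t i : ℤ) := by
    rw [leafOfIdx, sub_add_cancel, leafCoord, ← Finset.sum_range_reflect]
    refine congrArg _ (Finset.sum_congr rfl fun j hj => ?_)
    rw [Finset.mem_range] at hj
    rw [Nat.toNat_testBit, show k - 1 - (k - 1 - j) = j by omega]
  simp [ancestorCode, hcoord]

theorem ancestorCode_leafOfIdx_eq_iff_testBit {d k m : ℕ} (t s : ℕ) (hm : m ≤ k) :
    ancestorCode d k m (leafOfIdx d k t) = ancestorCode d k m (leafOfIdx d k s) ↔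
      ∀ i : Fin d, ∀ r < m,
        t.testBit (d * (k - m + r) + (d - 1 - i)) = s.testBit (d * (k - m + r) + (d - 1 - i)) := by
  simp only [funext_iff, ancestorCode_leafOfIdx, Nat.cast_inj,
    Nat.div_two_pow_eq_div_two_pow_iff, leafCoord, Nat.testBit_sum_toNat_mul_two_pow]
  refine forall_congr' fun i => ⟨fun h r hr => ?_, fun h n hn => ?_⟩
  · simpa [show k - m + r < k by omega] using h (k - m + r) (by omega)
  · obtain ⟨r, rfl⟩ := Nat.exists_eq_add_of_le hn
    by_cases hr : r < m
    · simp [h r hr]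
    · simp [show ¬ k - m + r < k by omega]

theorem ancestorCode_leafOfIdx_eq_iff {d k m t s : ℕ} (ht : t < 2 ^ (d * k))
    (hs : s < 2 ^ (d * k)) (hm : m ≤ k) :
    ancestorCode d k m (leafOfIdx d k t) = ancestorCode d k m (leafOfIdx d k s) ↔
      t / 2 ^ (d * (k - m)) = s / 2 ^ (d * (k - m)) := by
  rw [ancestorCode_leafOfIdx_eq_iff_testBit t s hm, Nat.div_two_pow_eq_div_two_pow_iff]
  have hsplit : d * k = d * (k - m) + d * m := by rw [← mul_add, Nat.sub_add_cancel hm]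
  refine ⟨fun h n hn => ?_, fun h i r _ => h _ (by rw [mul_add]; omega)⟩
  by_cases hnk : d * k ≤ n
  · have hpow := Nat.pow_le_pow_right two_pos hnk
    rw [Nat.testBit_lt_two_pow (ht.trans_le hpow), Nat.testBit_lt_two_pow (hs.trans_le hpow)]
  -- write `n = d * (k - m) + d * r + e` with `e < d`: a digit of coordinate `d - 1 - e`
  have hd : 0 < d := Nat.pos_of_ne_zero (by rintro rfl; simp at hnk)
  set r := (n - d * (k - m)) / d
  set e := (n - d * (k - m)) % d
  have hdiv : d * r + e = n - d * (k - m) := Nat.div_add_mod _ d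
  have he : e < d := Nat.mod_lt _ hd
  have hr : r < m := Nat.div_lt_of_lt_mul (by omega)
  have hpos : d * (k - m + r) + (d - 1 - (d - 1 - e)) = n := by rw [mul_add]; omega
  simpa only [hpos] using h ⟨d - 1 - e, by omega⟩ r hr

theorem ancestorCode_eq_ediv {d k a b : ℕ} (hba : b ≤ a) (hak : a ≤ k) (x : Zd d)
    (i : Fin d) :
    ancestorCode d k b x i = ancestorCode d k a x i / 2 ^ (a - b) := by
  rw [ancestorCode, ancestorCode, Int.ediv_ediv_of_nonneg (by positivity), ← pow_add,
    show k - a + (a - b) = k - b by omega]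

theorem ancestorCode_succ_eq_of_lt_commonDepth {d k j : ℕ} {x y : Zd d}
    (h : j < commonDepth d k x y) : ancestorCode d k (j + 1) x = ancestorCode d k (j + 1) y := by
  obtain ⟨a, ha, hja⟩ := Finset.lt_sup_iff.mp h
  rw [Finset.mem_range] at ha
  split_ifs at hja with hxy
  · funext i
    rw [ancestorCode_eq_ediv hja (by omega), ancestorCode_eq_ediv hja (by omega), hxy]
  · omega

theorem le_commonDepth {d k m : ℕ} {x y : Zd d} (hm : m ≤ k)
    (h : ancestorCode d k m x = ancestorCode d k m y) : m ≤ commonDepth d k x y := by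
  unfold commonDepth
  simpa [h] using Finset.le_sup (f := fun ℓ => if ancestorCode d k ℓ x = ancestorCode d k ℓ y
    then ℓ else 0) (Finset.mem_range.2 (Nat.lt_succ_of_le hm))

def leafEdge (d k t : ℕ) (j : Fin k) : TreeEdge d k :=
  (j, ancestorCode d k (j + 1) (leafOfIdx d k t))

theorem leafEdge_eq_of_lt_commonDepth {d k t s : ℕ} {j : Fin k}
    (h : j < commonDepth d k (leafOfIdx d k t) (leafOfIdx d k s)) :
    leafEdge d k t j = leafEdge d k s j := by
  rw [leafEdge, leafEdge, ancestorCode_succ_eq_of_lt_commonDepth h]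

theorem leafEdge_ne_of_commonDepth_le {d k i t : ℕ} (hi : i < 2 ^ (d * k)) (ht : t ≤ i - 1)
    {j : Fin k} (hj : commonDepth d k (leafOfIdx d k i) (leafOfIdx d k (i - 1)) ≤ j)
    (j' : Fin k) :
    leafEdge d k t j' ≠ leafEdge d k i j := by
  intro he
  obtain rfl : j = j' := (congrArg Prod.fst he).symm
  have hti := (ancestorCode_leafOfIdx_eq_iff (by omega) hi j.2).1 (congrArg Prod.snd he)
  -- the leaf `i - 1` lies between the leaves `t` and `i`, so it has the same ancestor
  have hpred : (i - 1) / 2 ^ (d * (k - (j + 1))) = i / 2 ^ (d * (k - (j + 1))) :=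
    le_antisymm (Nat.div_le_div_right (by omega)) (hti ▸ Nat.div_le_div_right ht)
  have := le_commonDepth j.2 ((ancestorCode_leafOfIdx_eq_iff hi (by omega) j.2).2 hpred.symm)
  omega

section Independence

variable {Ω ι κ : Type*} {mΩ : MeasurableSpace Ω} {P : Measure Ω}

theorem measure_inter_inter_mul_eq_of_indep {m₁ m₂ : MeasurableSpace Ω} (h : Indep m₁ m₂ P)
    {A A' B C : Set Ω} (hA' : MeasurableSet[m₁] A') (hB : MeasurableSet[m₂] B)
    (hC : MeasurableSet[m₂] C) (hAC : A ∩ C = A' ∩ C) :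
    P (A ∩ B ∩ C) * P C = P (A ∩ C) * P (B ∩ C) := by
  rw [Indep_iff] at h
  rw [inter_right_comm, hAC, inter_assoc, inter_comm C, h _ _ hA' (hB.inter hC), h _ _ hA' hC]
  ring

theorem measurableSet_iSup_comap_setOf_eq (X : ι → Ω → Bool) {T : Set ι} {e : ι}
    (he : e ∈ T) (b : Bool) :
    MeasurableSet[⨆ e ∈ T, MeasurableSpace.comap (X e) inferInstance] {ω | X e ω = b} :=
  le_iSup₂ (f := fun e (_ : e ∈ T) => MeasurableSpace.comap (X e) inferInstance) e he _
    ⟨{b}, trivial, rfl⟩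

theorem measurableSet_iSup_comap_setOf_comp_eq [Countable κ] (X : ι → Ω → Bool) {T : Set ι}
    {q : κ → ι} (hq : ∀ j, q j ∈ T) (v : κ → Bool) :
    MeasurableSet[⨆ e ∈ T, MeasurableSpace.comap (X e) inferInstance]
      {ω | (fun j => X (q j) ω) = v} := by
  simp only [funext_iff, ofPred_forall]
  exact .iInter fun j => measurableSet_iSup_comap_setOf_eq X (hq j) (v j)

theorem measure_inter_inter_mul_eq_of_iIndepFun [Countable κ] {X : ι → Ω → Bool}
    (hmeas : ∀ e, Measurable (X e)) (hX : iIndepFun X P) {q r : κ → ι} {T : Set ι}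
    {old : Set κ} (hr : ∀ j, r j ∈ T) (hold : ∀ j ∈ old, q j = r j)
    (hnew : ∀ j ∉ old, q j ∉ T)
    (v u : κ → Bool) {B : Set Ω}
    (hB : MeasurableSet[⨆ e ∈ T, MeasurableSpace.comap (X e) inferInstance] B) :
    P ({ω | (fun j => X (q j) ω) = v} ∩ B ∩ {ω | (fun j => X (r j) ω) = u}) *
        P {ω | (fun j => X (r j) ω) = u} =
      P ({ω | (fun j => X (q j) ω) = v} ∩ {ω | (fun j => X (r j) ω) = u}) *
        P (B ∩ {ω | (fun j => X (r j) ω) = u}) := by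
  have hdisj : Disjoint (q '' oldᶜ) T :=
    Set.disjoint_left.2 fun _ ⟨j, hj, he⟩ heT => hnew j hj (he ▸ heT)
  have hindep := indep_iSup_of_disjoint (fun e => (hmeas e).comap_le) hX.iIndep hdisj
  -- within `{X ∘ r = u}`, the event `{X ∘ q = v}` depends only on the edges `q j`, `j ∉ old`
  refine measure_inter_inter_mul_eq_of_indep hindep
    (A' := {_ω | ∀ j ∈ old, v j = u j} ∩ ⋂ (j) (_ : j ∉ old), {ω | X (q j) ω = v j})
    ?_ hB (measurableSet_iSup_comap_setOf_comp_eq X hr u) ?_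
  · exact (MeasurableSet.const _).inter <| .iInter fun j => .iInter fun hj =>
      measurableSet_iSup_comap_setOf_eq X (mem_image_of_mem q hj) (v j)
  · ext ω
    simp only [mem_inter_iff, mem_iInter, mem_ofPred_eq, funext_iff]
    constructor
    · rintro ⟨hv, hu⟩
      exact ⟨⟨fun j hj => (hv j).symm.trans (hold j hj ▸ hu j), fun j _ => hv j⟩, hu⟩
    · rintro ⟨⟨hvu, hv⟩, hu⟩
      refine ⟨fun j => ?_, hu⟩
      by_cases hj : j ∈ old
      · rw [hold j hj, hu j, hvu j hj]
      · exact hv j hj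

end Independence

theorem statement18_general (d k : ℕ)
    (Ω : Type) (mΩ : MeasurableSpace Ω) (P : Measure Ω)
    (X : TreeEdge d k → Ω → Bool) (hmeas : ∀ e, Measurable (X e))
    (hindep : iIndepFun X P)
    (i : ℕ) (hi' : i + 1 ≤ 2 ^ (d * k))
    (v u : Fin k → Bool) (w : ℕ → Fin k → Bool) :
    P ({ω | leafPath d k i (fun e => X e ω) = v} ∩
        {ω | ∀ s, 1 ≤ s → s ≤ i - 1 → leafPath d k (s - 1) (fun e => X e ω) = w s} ∩
        {ω | leafPath d k (i - 1) (fun e => X e ω) = u}) *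
      P {ω | leafPath d k (i - 1) (fun e => X e ω) = u} =
    P ({ω | leafPath d k i (fun e => X e ω) = v} ∩
        {ω | leafPath d k (i - 1) (fun e => X e ω) = u}) *
      P ({ω | ∀ s, 1 ≤ s → s ≤ i - 1 → leafPath d k (s - 1) (fun e => X e ω) = w s} ∩
        {ω | leafPath d k (i - 1) (fun e => X e ω) = u}) := by
  let past : Set (TreeEdge d k) := {e | ∃ t ≤ i - 1, ∃ j, leafEdge d k t j = e}
  have hpast : MeasurableSet[⨆ e ∈ past, MeasurableSpace.comap (X e) inferInstance]
      {ω | ∀ s, 1 ≤ s → s ≤ i - 1 → leafPath d k (s - 1) (fun e => X e ω) = w s} := by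
    simp only [ofPred_forall]
    exact .iInter fun s => .iInter fun _ => .iInter fun hs =>
      measurableSet_iSup_comap_setOf_comp_eq X (T := past)
        (fun j => ⟨s - 1, by omega, j, rfl⟩) (w s)
  exact measure_inter_inter_mul_eq_of_iIndepFun hmeas hindep (q := leafEdge d k i) (T := past)
    (old := {j | j < commonDepth d k (leafOfIdx d k i) (leafOfIdx d k (i - 1))})
    (fun j => ⟨i - 1, le_rfl, j, rfl⟩) (fun _ hj => leafEdge_eq_of_lt_commonDepth hj)
    (fun _ hj ⟨_, ht, j', he⟩ =>
      leafEdge_ne_of_commonDepth_le (by omega) ht (not_lt.1 hj) j' he)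
    v u hpast

/-- For Bernoulli bond percolation on the complete `2^d`-ary tree of
height `k`, the sequence `(Y_i)` of root-to-leaf edge-state vectors, with leaves listed in
lexicographic order (`Y_i = leafPath d k (i-1)` for the `1`-indexed `i`), is a Markov chain:
for `2 ≤ i ≤ 2^(dk) - 1`, `Y_{i+1}` is conditionally independent of `(Y_1, …, Y_{i-1})`
given `Y_i`. -/
theorem statement18 (d k : ℕ) (hd : 1 ≤ d) (hk : 1 ≤ k) (p : ℝ) (hp : p ∈ Set.Icc (0:ℝ) 1)
    (Ω : Type) (mΩ : MeasurableSpace Ω) (P : Measure Ω) (hP : IsProbabilityMeasure P)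
    (X : TreeEdge d k → Ω → Bool) (hmeas : ∀ e, Measurable (X e))
    (hindep : iIndepFun X P)
    (hmarg : ∀ e, P {ω | X e ω = true} = ENNReal.ofReal p)
    (i : ℕ) (hi : 2 ≤ i) (hi' : i + 1 ≤ 2 ^ (d * k))
    (v u : Fin k → Bool) (w : ℕ → Fin k → Bool) :
    P ({ω | leafPath d k i (fun e => X e ω) = v} ∩
        {ω | ∀ s, 1 ≤ s → s ≤ i - 1 → leafPath d k (s - 1) (fun e => X e ω) = w s} ∩
        {ω | leafPath d k (i - 1) (fun e => X e ω) = u}) *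
      P {ω | leafPath d k (i - 1) (fun e => X e ω) = u} =
    P ({ω | leafPath d k i (fun e => X e ω) = v} ∩
        {ω | leafPath d k (i - 1) (fun e => X e ω) = u}) *
      P ({ω | ∀ s, 1 ≤ s → s ≤ i - 1 → leafPath d k (s - 1) (fun e => X e ω) = w s} ∩
        {ω | leafPath d k (i - 1) (fun e => X e ω) = u}) :=
  statement18_general d k Ω mΩ P X hmeas hindep i hi' v u w
end
end
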